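/- arXiv:2410.06909 — 2 statements merged into one kernel-verified Lean document; each statement's English description precedes it below -/
import Mathlib

section
/- Let E and F be pseudo-normed real vector spaces, s_0 < s < s_1 real numbers, q ∈ [1,∞), r > 0, and let Φ : B_{s,q}(0,r) → Σ^{s_0}_∞(F) satisfy the weak Lipschitz and tame estimates with constants C₀, C₁. Set κ = min(s_1−s, s−s_0), C = max{C₀, (1+2^{s_1−s})C₁} and A = 2/(1−2^{−κ}). For f ∈ B_{s,q}(0,r) set γ_p := 2^{−p(s_1−s)} ∑_{k=0}^p 2^{k s_1}‖f_k‖_E and c_p := γ_p + γ_{p+1}. Then for every n ∈ ℕ the sequence Φ(f) − Φ(S_n f) belongs to Σ^s_q(F) and ‖Φ(f) − Φ(S_n f)‖_{Σ^s_q(F)} ≤ A C (∑_{p≥n} c_p^q)^{1/q}; in particular ‖Φ(f) − Φ(S_n f)‖_{Σ^s_q(F)} → 0 as n → ∞. -/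
open Filter
open scoped ENNReal NNReal

/-- A pseudo-norm on a real vector space: nonnegative, symmetric, subadditive,
and vanishing exactly at `0`. -/
structure IsPseudoNorm {E : Type*} [AddCommGroup E] [Module ℝ E] (N : E → ℝ) : Prop where
  nonneg : ∀ x, 0 ≤ N x
  neg : ∀ x, N (-x) = N x
  add_le : ∀ x y, N (x + y) ≤ N x + N y
  eq_zero_iff : ∀ x, N x = 0 ↔ x = 0

/-- The `Σ^s_q(E)` pseudo-norm of a sequence `f : ℕ → E`:
`(∑_k 2^{qks} ‖f_k‖_E^q)^{1/q}` for `q < ∞` and `sup_k 2^{ks} ‖f_k‖_E` for `q = ∞`. -/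
noncomputable def sigmaNorm {E : Type*} (N : E → ℝ) (s : ℝ) (q : ℝ≥0∞) (f : ℕ → E) : ℝ≥0∞ :=
  if q = ⊤ then ⨆ k : ℕ, ENNReal.ofReal ((2 : ℝ) ^ ((k : ℝ) * s) * N (f k))
  else (∑' k : ℕ, ENNReal.ofReal ((2 : ℝ) ^ ((k : ℝ) * s) * N (f k)) ^ q.toReal) ^ (1 / q.toReal)

/-- Membership in `Σ^s_q(E)`: finiteness of the norm when `q < ∞`, and
`2^{ks}‖f_k‖_E → 0` when `q = ∞`. -/
def memSigma {E : Type*} (N : E → ℝ) (s : ℝ) (q : ℝ≥0∞) (f : ℕ → E) : Prop :=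
  if q = ⊤ then Tendsto (fun k : ℕ => (2 : ℝ) ^ ((k : ℝ) * s) * N (f k)) atTop (nhds 0)
  else sigmaNorm N s q f < ⊤

/-- Friedrichs smoothing operator `S_n`: truncation of a sequence after index `n`. -/
def smoothS {E : Type*} [Zero E] (n : ℕ) (f : ℕ → E) : ℕ → E :=
  fun k => if k ≤ n then f k else 0

/-! Coordinatewise, `Φ(f) - Φ(S_n f) = ∑_{p ≥ n} (Φ(S_{p+1} f) - Φ(S_p f))`: the partial sums
converge because `S_m f → f` in `Σ^{s₀}_1`, hence `Φ(S_m f) → Φ(f)` in `Σ^{s₀}_∞` by the weak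
Lipschitz estimate. At frequency `k` the `p`-th increment is at most `C c_p 2^{-κ|k-p|}`: for
`k ≤ p` by the weak Lipschitz estimate, because `S_{p+1} f - S_p f` is the single term `f_{p+1}`,
and for `k > p` by the tame estimate applied to `S_p f` and `S_{p+1} f` separately. Young's
inequality for the kernel `2^{-κ|k|}`, whose `ℓ¹` norm is at most `A`, gives the bound; the same
inequality shows `(c_p) ∈ ℓ^q`, so its tails vanish. -/

open MeasureTheory Topology

noncomputable def lqNorm (q : ℝ) (f : ℕ → ℝ≥0∞) : ℝ≥0∞ := (∑' k, f k ^ q) ^ (1 / q)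

lemma tsum_ite_le_eq_tsum_nat_add (n : ℕ) (g : ℕ → ℝ≥0∞) :
    ∑' p, (if n ≤ p then g p else 0) = ∑' i, g (n + i) := by
  rw [← ENNReal.summable.sum_add_tsum_nat_add' (k := n), Finset.sum_eq_zero fun p hp =>
    if_neg (not_le.2 (Finset.mem_range.1 hp)), zero_add]
  exact tsum_congr fun i => by rw [if_pos (Nat.le_add_left n i), add_comm]

lemma tsum_le_tsum_nat_add_add_tsum_reflect (k : ℕ) (g : ℕ → ℝ≥0∞) :
    ∑' p, g p ≤ ∑' j, g (k + j) + ∑' j, if j ≤ k then g (k - j) else 0 := by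
  rw [← ENNReal.summable.sum_add_tsum_nat_add' (k := k), add_comm]
  simp_rw [add_comm _ k]
  gcongr
  calc ∑ p ∈ Finset.range k, g p
      ≤ ∑ p ∈ Finset.range (k + 1), g p := Finset.sum_le_sum_of_subset (by simp)
    _ = ∑ j ∈ Finset.range (k + 1), if j ≤ k then g (k - j) else 0 := by
      rw [← Finset.sum_range_reflect]
      exact Finset.sum_congr rfl fun j hj => by
        rw [if_pos (Nat.lt_succ_iff.1 (Finset.mem_range.1 hj)), Nat.add_sub_cancel]
    _ ≤ _ := ENNReal.sum_le_tsum _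

section lqNorm

variable {q : ℝ}

lemma lqNorm_le_iff (hq : 0 < q) {f : ℕ → ℝ≥0∞} {a : ℝ≥0∞} :
    lqNorm q f ≤ a ↔ ∑' k, f k ^ q ≤ a ^ q := by
  rw [lqNorm, one_div, ENNReal.rpow_inv_le_iff hq]

lemma lqNorm_ne_top_iff (hq : 0 < q) {f : ℕ → ℝ≥0∞} : lqNorm q f ≠ ⊤ ↔ ∑' k, f k ^ q ≠ ⊤ := by
  simp [lqNorm, ENNReal.rpow_eq_top_iff, hq, not_lt.2 hq.le]

lemma le_lqNorm (hq : 0 < q) (f : ℕ → ℝ≥0∞) (k : ℕ) : f k ≤ lqNorm q f := by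
  rw [lqNorm, one_div, ENNReal.le_rpow_inv_iff hq]
  exact ENNReal.le_tsum k

lemma lqNorm_mono (hq : 0 ≤ q) {f g : ℕ → ℝ≥0∞} (h : ∀ k, f k ≤ g k) :
    lqNorm q f ≤ lqNorm q g := by
  unfold lqNorm
  gcongr with k
  exact h k

lemma lqNorm_const_mul (hq : 0 < q) (a : ℝ≥0∞) (f : ℕ → ℝ≥0∞) :
    lqNorm q (fun k => a * f k) = a * lqNorm q f := by
  simp_rw [lqNorm, ENNReal.mul_rpow_of_nonneg _ _ hq.le, ENNReal.tsum_mul_left,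
    ENNReal.mul_rpow_of_nonneg _ _ (one_div_nonneg.2 hq.le), ← ENNReal.rpow_mul,
    mul_one_div_cancel hq.ne', ENNReal.rpow_one]

lemma lqNorm_comp_add_le (hq : 0 ≤ q) (f : ℕ → ℝ≥0∞) (j : ℕ) :
    lqNorm q (fun k => f (k + j)) ≤ lqNorm q f :=
  ENNReal.rpow_le_rpow
    (ENNReal.tsum_comp_le_tsum_of_injective (add_left_injective j) (fun k => f k ^ q))
    (one_div_nonneg.2 hq)

lemma lqNorm_shift (hq : 0 < q) (f : ℕ → ℝ≥0∞) (j : ℕ) :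
    lqNorm q (fun k => if j ≤ k then f (k - j) else 0) = lqNorm q f := by
  have h : ∀ k, (if j ≤ k then f (k - j) else 0) ^ q = if j ≤ k then f (k - j) ^ q else 0 :=
    fun k => by split_ifs <;> simp [hq]
  simp_rw [lqNorm, h, tsum_ite_le_eq_tsum_nat_add, Nat.add_sub_cancel_left]

lemma lqNorm_add_le (hq : 1 ≤ q) (f g : ℕ → ℝ≥0∞) :
    lqNorm q (f + g) ≤ lqNorm q f + lqNorm q g := by
  simpa only [lqNorm, lintegral_count] using ENNReal.lintegral_Lp_add_le (μ := Measure.count)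
    (measurable_of_countable f).aemeasurable (measurable_of_countable g).aemeasurable hq

lemma lqNorm_sum_le (hq : 1 ≤ q) {ι : Type*} (t : Finset ι) (F : ι → ℕ → ℝ≥0∞) :
    lqNorm q (fun k => ∑ j ∈ t, F j k) ≤ ∑ j ∈ t, lqNorm q (F j) := by
  have hq0 : 0 < q := by linarith
  induction t using Finset.cons_induction with
  | empty => simp [lqNorm, hq0]
  | cons a t ha ih =>
    simp only [Finset.sum_cons]
    exact (lqNorm_add_le hq (F a) _).trans (by gcongr)

lemma lqNorm_tsum_le (hq : 1 ≤ q) (F : ℕ → ℕ → ℝ≥0∞) :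
    lqNorm q (fun k => ∑' j, F j k) ≤ ∑' j, lqNorm q (F j) := by
  have hq0 : 0 < q := by linarith
  have hmono : ∀ k, Monotone fun m => (∑ j ∈ Finset.range m, F j k) ^ q := fun k m m' h =>
    ENNReal.rpow_le_rpow (Finset.sum_le_sum_of_subset (Finset.range_subset_range.2 h)) hq0.le
  rw [lqNorm_le_iff hq0, ENNReal.tsum_eq_iSup_sum]
  refine iSup_le fun t => ?_
  simp_rw [ENNReal.tsum_eq_iSup_nat, ← ENNReal.orderIsoRpow_apply q hq0, OrderIso.map_iSup,
    ENNReal.orderIsoRpow_apply, ENNReal.finsetSum_iSup_of_monotone fun k => hmono k]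
  refine iSup_le fun m => ?_
  calc ∑ k ∈ t, (∑ j ∈ Finset.range m, F j k) ^ q
      ≤ ∑' k, (∑ j ∈ Finset.range m, F j k) ^ q := ENNReal.sum_le_tsum t
    _ ≤ (∑ j ∈ Finset.range m, lqNorm q (F j)) ^ q := (lqNorm_le_iff hq0).1 (lqNorm_sum_le hq _ F)
    _ ≤ ⨆ m, (∑ j ∈ Finset.range m, lqNorm q (F j)) ^ q := le_iSup_of_le m le_rfl

/-- Young's inequality for the kernel `λ^{|k-p|}`, whose `ℓ¹` norm is at most `2 (1-λ)⁻¹`. -/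
lemma lqNorm_conv_le (hq : 1 ≤ q) (lam : ℝ≥0∞) (d : ℕ → ℝ≥0∞) :
    lqNorm q (fun k => ∑' p, lam ^ Nat.dist k p * d p) ≤ 2 * (1 - lam)⁻¹ * lqNorm q d := by
  have hq0 : 0 < q := by linarith
  set G : ℕ → ℕ → ℝ≥0∞ := fun j k => d (k + j) + if j ≤ k then d (k - j) else 0
  have hpt : ∀ k, ∑' p, lam ^ Nat.dist k p * d p ≤ ∑' j, lam ^ j * G j k := fun k => by
    refine (tsum_le_tsum_nat_add_add_tsum_reflect k _).trans_eq ?_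
    rw [← ENNReal.tsum_add]
    refine tsum_congr fun j => ?_
    rw [Nat.dist_eq_sub_of_le (Nat.le_add_right k j), Nat.add_sub_cancel_left, mul_add, mul_ite,
      mul_zero]
    refine congrArg _ (ite_congr rfl (fun hj => ?_) fun _ => rfl)
    rw [Nat.dist_eq_sub_of_le_right (Nat.sub_le k j), Nat.sub_sub_self hj]
  have hG : ∀ j, lqNorm q (G j) ≤ 2 * lqNorm q d := fun j => by
    rw [two_mul]
    refine (lqNorm_add_le hq _ _).trans (add_le_add (lqNorm_comp_add_le hq0.le d j) ?_)
    rw [lqNorm_shift hq0]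
  calc lqNorm q (fun k => ∑' p, lam ^ Nat.dist k p * d p)
      ≤ lqNorm q (fun k => ∑' j, lam ^ j * G j k) := lqNorm_mono hq0.le hpt
    _ ≤ ∑' j, lqNorm q (fun k => lam ^ j * G j k) := lqNorm_tsum_le hq _
    _ ≤ ∑' j, lam ^ j * (2 * lqNorm q d) := by
      gcongr with j
      rw [lqNorm_const_mul hq0]
      gcongr
      exact hG j
    _ = 2 * (1 - lam)⁻¹ * lqNorm q d := by
      rw [ENNReal.tsum_mul_right, ENNReal.tsum_geometric]
      ring

end lqNorm

lemma tendsto_const_mul_tsum_nat_add_rpow {q : ℝ} (hq : 0 < q) {a : ℕ → ℝ≥0∞}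
    (ha : ∑' p, a p ^ q ≠ ⊤) {K : ℝ≥0∞} (hK : K ≠ ⊤) :
    Tendsto (fun n => K * (∑' p, a (n + p) ^ q) ^ (1 / q)) atTop (𝓝 0) :=
  (ENNReal.tendsto_const_mul_rpow_nhds_zero_of_pos hK (one_div_pos.2 hq)).comp
    ((ENNReal.tendsto_sum_nat_add _ ha).congr fun n => tsum_congr fun p => by rw [add_comm p n])

section SigmaNorm

variable {G : Type*}

lemma sigmaNorm_ofReal (N : G → ℝ) (σ : ℝ) {q : ℝ} (hq : 0 ≤ q) (v : ℕ → G) :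
    sigmaNorm N σ (ENNReal.ofReal q) v
      = lqNorm q (fun k => ENNReal.ofReal ((2 : ℝ) ^ ((k : ℝ) * σ) * N (v k))) := by
  rw [sigmaNorm, if_neg ENNReal.ofReal_ne_top, ENNReal.toReal_ofReal hq, lqNorm]

lemma sigmaNorm_one (N : G → ℝ) (σ : ℝ) (v : ℕ → G) :
    sigmaNorm N σ 1 v = ∑' k : ℕ, ENNReal.ofReal ((2 : ℝ) ^ ((k : ℝ) * σ) * N (v k)) := by
  simp [sigmaNorm]

lemma sigmaNorm_top (N : G → ℝ) (σ : ℝ) (v : ℕ → G) :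
    sigmaNorm N σ ⊤ v = ⨆ k : ℕ, ENNReal.ofReal ((2 : ℝ) ^ ((k : ℝ) * σ) * N (v k)) :=
  if_pos rfl

lemma memSigma_ofReal (N : G → ℝ) (σ q : ℝ) (v : ℕ → G) :
    memSigma N σ (ENNReal.ofReal q) v ↔ sigmaNorm N σ (ENNReal.ofReal q) v < ⊤ := by
  rw [memSigma, if_neg ENNReal.ofReal_ne_top]

lemma memSigma_one (N : G → ℝ) (σ : ℝ) (v : ℕ → G) :
    memSigma N σ 1 v ↔ sigmaNorm N σ 1 v < ⊤ := by
  rw [memSigma, if_neg ENNReal.one_ne_top]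

lemma ofReal_le_sigmaNorm_top (N : G → ℝ) (σ : ℝ) (v : ℕ → G) (k : ℕ) :
    ENNReal.ofReal ((2 : ℝ) ^ ((k : ℝ) * σ) * N (v k)) ≤ sigmaNorm N σ ⊤ v := by
  rw [sigmaNorm_top]
  exact le_iSup (fun k : ℕ => ENNReal.ofReal ((2 : ℝ) ^ ((k : ℝ) * σ) * N (v k))) k

lemma sigmaNorm_mono {N : G → ℝ} {σ : ℝ} {q : ℝ≥0∞} {v w : ℕ → G}
    (h : ∀ k, N (v k) ≤ N (w k)) : sigmaNorm N σ q v ≤ sigmaNorm N σ q w := by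
  have hterm : ∀ k : ℕ, ENNReal.ofReal ((2 : ℝ) ^ ((k : ℝ) * σ) * N (v k))
      ≤ ENNReal.ofReal ((2 : ℝ) ^ ((k : ℝ) * σ) * N (w k)) := fun k =>
    ENNReal.ofReal_le_ofReal (mul_le_mul_of_nonneg_left (h k) (by positivity))
  unfold sigmaNorm
  split_ifs
  · exact iSup_mono hterm
  · gcongr with k
    exact h k

lemma tendsto_ofReal_apply_of_tendsto_sigmaNorm_top {N : G → ℝ} {σ : ℝ} {z : ℕ → ℕ → G}
    (h : Tendsto (fun m => sigmaNorm N σ ⊤ (z m)) atTop (𝓝 0)) (k : ℕ) :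
    Tendsto (fun m => ENNReal.ofReal (N (z m k))) atTop (𝓝 0) := by
  have hbound : ∀ m, ENNReal.ofReal (N (z m k))
      ≤ ENNReal.ofReal ((2 : ℝ) ^ (-((k : ℝ) * σ))) * sigmaNorm N σ ⊤ (z m) := fun m => by
    rw [← inv_mul_cancel_left₀ (Real.rpow_pos_of_pos two_pos ((k : ℝ) * σ)).ne' (N (z m k)),
      ← Real.rpow_neg two_pos.le, ENNReal.ofReal_mul (by positivity)]
    exact mul_le_mul' le_rfl (ofReal_le_sigmaNorm_top N σ (z m) k)
  refine tendsto_of_tendsto_of_tendsto_of_le_of_le tendsto_const_nhds ?_ (fun _ => bot_le) hbound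
  simpa using ENNReal.Tendsto.const_mul h (Or.inr ENNReal.ofReal_ne_top)

lemma two_rpow_mul_le_of_sigmaNorm_top_le {N : G → ℝ} {σ B : ℝ} {u : ℕ → G}
    (h : sigmaNorm N σ ⊤ u ≤ ENNReal.ofReal B) (hB : 0 ≤ B) (k : ℕ) :
    (2 : ℝ) ^ ((k : ℝ) * σ) * N (u k) ≤ B :=
  (ENNReal.ofReal_le_ofReal_iff hB).1 ((ofReal_le_sigmaNorm_top N σ u k).trans h)

lemma sigmaNorm_one_ne_top_of_lt {N : G → ℝ} {s₀ s q : ℝ} (hs : s₀ < s) (hq : 0 < q)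
    {f : ℕ → G} (hf : sigmaNorm N s (ENNReal.ofReal q) f ≠ ⊤) : sigmaNorm N s₀ 1 f ≠ ⊤ := by
  set ρ : ℝ≥0∞ := ENNReal.ofReal ((2 : ℝ) ^ (s₀ - s))
  have hρ : ρ < 1 :=
    ENNReal.ofReal_lt_one.2 (Real.rpow_lt_one_of_one_lt_of_neg one_lt_two (by linarith))
  have hterm : ∀ k : ℕ, ENNReal.ofReal ((2 : ℝ) ^ ((k : ℝ) * s₀) * N (f k))
      ≤ sigmaNorm N s (ENNReal.ofReal q) f * ρ ^ k := fun k => by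
    have hsplit : (2 : ℝ) ^ ((k : ℝ) * s₀) * N (f k)
        = ((2 : ℝ) ^ (s₀ - s)) ^ k * ((2 : ℝ) ^ ((k : ℝ) * s) * N (f k)) := by
      rw [← Real.rpow_mul_natCast two_pos.le, ← mul_assoc, ← Real.rpow_add two_pos]
      ring_nf
    rw [hsplit, ENNReal.ofReal_mul (by positivity), ENNReal.ofReal_pow (by positivity), mul_comm,
      sigmaNorm_ofReal N s hq.le]
    gcongr
    exact le_lqNorm hq (fun k : ℕ => ENNReal.ofReal ((2 : ℝ) ^ ((k : ℝ) * s) * N (f k))) k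
  rw [sigmaNorm_one]
  refine ne_top_of_le_ne_top ?_ (ENNReal.tsum_le_tsum hterm)
  rw [ENNReal.tsum_mul_left, ENNReal.tsum_geometric]
  exact ENNReal.mul_ne_top hf (ENNReal.inv_ne_top.2 (tsub_pos_of_lt hρ).ne')

end SigmaNorm

lemma smoothS_succ_sub_smoothS {E : Type*} [AddGroup E] (p : ℕ) (f : ℕ → E) :
    smoothS (p + 1) f - smoothS p f = Pi.single (p + 1) (f (p + 1)) := by
  funext k
  simp only [Pi.sub_apply, smoothS, Pi.single_apply]
  rcases lt_trichotomy k (p + 1) with h | rfl | h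
  · simp [Nat.lt_succ_iff.1 h, h.le, h.ne]
  · simp
  · simp [h.ne', not_le.2 h, not_le.2 (Nat.lt_of_succ_lt h)]

lemma sigmaNorm_one_single {G : Type*} [Zero G] {N : G → ℝ} (hN0 : N 0 = 0) (σ : ℝ) (i : ℕ)
    (x : G) :
    sigmaNorm N σ 1 (Pi.single i x) = ENNReal.ofReal ((2 : ℝ) ^ ((i : ℝ) * σ) * N x) := by
  rw [sigmaNorm_one, tsum_eq_single i fun k hk => by simp [hk, hN0]]
  simp

namespace IsPseudoNorm

variable {E : Type*} [AddCommGroup E] [Module ℝ E] {N : E → ℝ}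

lemma map_zero (hN : IsPseudoNorm N) : N 0 = 0 := (hN.eq_zero_iff 0).2 rfl

lemma sub_le (hN : IsPseudoNorm N) (x y : E) : N (x - y) ≤ N x + N y := by
  rw [sub_eq_add_neg, ← hN.neg y]
  exact hN.add_le x (-y)

lemma ofReal_le_tsum_of_tendsto (hN : IsPseudoNorm N) {y : E} {x : ℕ → E}
    (h : Tendsto (fun m => ENNReal.ofReal (N (y - x m))) atTop (𝓝 0)) (n : ℕ) :
    ENNReal.ofReal (N (y - x n)) ≤ ∑' i, ENNReal.ofReal (N (x (n + i + 1) - x (n + i))) := by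
  have hpartial : ∀ m, N (y - x n)
      ≤ ∑ i ∈ Finset.range m, N (x (n + i + 1) - x (n + i)) + N (y - x (n + m)) := by
    intro m
    induction m with
    | zero => simp
    | succ m ih =>
      rw [Finset.sum_range_succ, add_assoc]
      refine ih.trans (add_le_add le_rfl ?_)
      rw [show y - x (n + m) = (x (n + m + 1) - x (n + m)) + (y - x (n + m + 1)) by abel]
      exact hN.add_le _ _
  have hlim : Tendsto (fun m => ∑' i, ENNReal.ofReal (N (x (n + i + 1) - x (n + i)))
      + ENNReal.ofReal (N (y - x (n + m)))) atTop
      (𝓝 (∑' i, ENNReal.ofReal (N (x (n + i + 1) - x (n + i))))) := by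
    simpa using tendsto_const_nhds.add
      (h.comp (tendsto_atTop_mono (fun m => Nat.le_add_left m n) tendsto_id))
  refine ge_of_tendsto' hlim fun m => (ENNReal.ofReal_le_ofReal (hpartial m)).trans ?_
  rw [ENNReal.ofReal_add (Finset.sum_nonneg fun i _ => hN.nonneg _) (hN.nonneg _),
    ENNReal.ofReal_sum_of_nonneg fun i _ => hN.nonneg _]
  gcongr
  exact ENNReal.sum_le_tsum _

end IsPseudoNorm

section Smoothing

variable {E : Type*} [AddCommGroup E] [Module ℝ E] {N : E → ℝ}

lemma sigmaNorm_smoothS_le (hN : IsPseudoNorm N) (σ : ℝ) (q : ℝ≥0∞) (m : ℕ) (f : ℕ → E) :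
    sigmaNorm N σ q (smoothS m f) ≤ sigmaNorm N σ q f :=
  sigmaNorm_mono fun k => by
    unfold smoothS
    split_ifs
    · exact le_rfl
    · rw [hN.map_zero]
      exact hN.nonneg _

lemma sigmaNorm_one_smoothS (hN : IsPseudoNorm N) (σ : ℝ) (p : ℕ) (f : ℕ → E) :
    sigmaNorm N σ 1 (smoothS p f)
      = ENNReal.ofReal (∑ k ∈ Finset.range (p + 1), (2 : ℝ) ^ ((k : ℝ) * σ) * N (f k)) := by
  rw [sigmaNorm_one, tsum_eq_sum (s := Finset.range (p + 1)) fun k hk => by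
      simp [smoothS, Nat.lt_succ_iff.not.1 (Finset.mem_range.not.1 hk), hN.map_zero],
    ENNReal.ofReal_sum_of_nonneg fun k _ => mul_nonneg (by positivity) (hN.nonneg _)]
  exact Finset.sum_congr rfl fun k hk => by
    simp [smoothS, Nat.lt_succ_iff.1 (Finset.mem_range.1 hk)]

lemma memSigma_one_smoothS (hN : IsPseudoNorm N) (σ : ℝ) (p : ℕ) (f : ℕ → E) :
    memSigma N σ 1 (smoothS p f) := by
  rw [memSigma_one, sigmaNorm_one_smoothS hN]
  exact ENNReal.ofReal_lt_top

lemma tendsto_sigmaNorm_one_sub_smoothS (hN : IsPseudoNorm N) {σ : ℝ} {f : ℕ → E}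
    (hf : sigmaNorm N σ 1 f ≠ ⊤) :
    Tendsto (fun m => sigmaNorm N σ 1 (f - smoothS m f)) atTop (𝓝 0) := by
  set T : ℕ → ℝ≥0∞ := fun k => ENNReal.ofReal ((2 : ℝ) ^ ((k : ℝ) * σ) * N (f k))
  have htail : ∀ m, sigmaNorm N σ 1 (f - smoothS m f) = ∑' i, T (i + (m + 1)) := fun m => by
    rw [sigmaNorm_one, ← tsum_congr fun k => ?_, tsum_ite_le_eq_tsum_nat_add (m + 1) T]
    · simp_rw [add_comm (m + 1)]
    · by_cases hk : m + 1 ≤ k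
      · simp [T, smoothS, hk, not_le.2 (Nat.lt_of_succ_le hk)]
      · simp [smoothS, hk, Nat.lt_succ_iff.1 (not_le.1 hk), hN.map_zero]
  simp_rw [htail]
  rw [sigmaNorm_one] at hf
  exact (ENNReal.tendsto_sum_nat_add T hf).comp (tendsto_add_atTop_nat 1)

lemma tendsto_ofReal_apply_of_lipschitz {F : Type*} {NF : F → ℝ} (hN : IsPseudoNorm N)
    {s₀ s q C₀ : ℝ} (hs : s₀ < s) (hq : 0 < q) {f : ℕ → E}
    (hf : sigmaNorm N s (ENNReal.ofReal q) f ≠ ⊤) {z : ℕ → ℕ → F}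
    (hz : ∀ m, sigmaNorm NF s₀ ⊤ (z m) ≤ ENNReal.ofReal C₀ * sigmaNorm N s₀ 1 (f - smoothS m f))
    (k : ℕ) : Tendsto (fun m => ENNReal.ofReal (NF (z m k))) atTop (𝓝 0) := by
  refine tendsto_ofReal_apply_of_tendsto_sigmaNorm_top (σ := s₀) ?_ k
  have h := ENNReal.Tendsto.const_mul (a := ENNReal.ofReal C₀)
    (tendsto_sigmaNorm_one_sub_smoothS hN (sigmaNorm_one_ne_top_of_lt hs hq hf))
    (Or.inr ENNReal.ofReal_ne_top)
  rw [mul_zero] at h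
  exact tendsto_of_tendsto_of_tendsto_of_le_of_le tendsto_const_nhds h (fun _ => bot_le) hz

end Smoothing

/-- `γ_p = 2^{-p(s₁-s)} ‖S_p f‖_{Σ^{s₁}_1}`. -/
noncomputable def gammaSeq {E : Type*} (N : E → ℝ) (s s₁ : ℝ) (f : ℕ → E) (p : ℕ) : ℝ :=
  (2 : ℝ) ^ (-((p : ℝ) * (s₁ - s))) *
    ∑ k ∈ Finset.range (p + 1), (2 : ℝ) ^ ((k : ℝ) * s₁) * N (f k)

section Gamma

variable {E : Type*} [AddCommGroup E] [Module ℝ E] {N : E → ℝ} {s s₁ : ℝ} {f : ℕ → E}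

lemma gammaSeq_nonneg (hN : IsPseudoNorm N) (p : ℕ) : 0 ≤ gammaSeq N s s₁ f p :=
  mul_nonneg (by positivity)
    (Finset.sum_nonneg fun k _ => mul_nonneg (by positivity) (hN.nonneg _))

lemma two_rpow_mul_le_gammaSeq (hN : IsPseudoNorm N) (p : ℕ) :
    (2 : ℝ) ^ ((p : ℝ) * s) * N (f p) ≤ gammaSeq N s s₁ f p := by
  have hlast := Finset.single_le_sum (f := fun k : ℕ => (2 : ℝ) ^ ((k : ℝ) * s₁) * N (f k))
    (fun k _ => mul_nonneg (by positivity) (hN.nonneg _)) (Finset.self_mem_range_succ p)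
  calc (2 : ℝ) ^ ((p : ℝ) * s) * N (f p)
      = (2 : ℝ) ^ (-((p : ℝ) * (s₁ - s))) * ((2 : ℝ) ^ ((p : ℝ) * s₁) * N (f p)) := by
        rw [← mul_assoc, ← Real.rpow_add two_pos]
        ring_nf
    _ ≤ gammaSeq N s s₁ f p := mul_le_mul_of_nonneg_left hlast (by positivity)

lemma sigmaNorm_one_smoothS_eq_gammaSeq (hN : IsPseudoNorm N) (p : ℕ) :
    sigmaNorm N s₁ 1 (smoothS p f)
      = ENNReal.ofReal ((2 : ℝ) ^ ((p : ℝ) * (s₁ - s)) * gammaSeq N s s₁ f p) := by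
  rw [sigmaNorm_one_smoothS hN, gammaSeq, ← mul_assoc, ← Real.rpow_add two_pos, add_neg_cancel,
    Real.rpow_zero, one_mul]

lemma ofReal_gammaSeq_le (hN : IsPseudoNorm N) (p : ℕ) :
    ENNReal.ofReal (gammaSeq N s s₁ f p)
      ≤ ∑' k, ENNReal.ofReal ((2 : ℝ) ^ (-(s₁ - s))) ^ Nat.dist p k
        * ENNReal.ofReal ((2 : ℝ) ^ ((k : ℝ) * s) * N (f k)) := by
  rw [gammaSeq, Finset.mul_sum, ENNReal.ofReal_sum_of_nonneg fun k _ =>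
    mul_nonneg (by positivity) (mul_nonneg (by positivity) (hN.nonneg _))]
  refine le_of_eq_of_le (Finset.sum_congr rfl fun k hk => ?_) (ENNReal.sum_le_tsum _)
  have hkp : k ≤ p := Nat.lt_succ_iff.1 (Finset.mem_range.1 hk)
  rw [Nat.dist_eq_sub_of_le_right hkp, ← ENNReal.ofReal_pow (by positivity),
    ← ENNReal.ofReal_mul (by positivity), ← Real.rpow_mul_natCast two_pos.le, ← mul_assoc,
    ← mul_assoc, ← Real.rpow_add two_pos, ← Real.rpow_add two_pos, Nat.cast_sub hkp]
  ring_nf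

lemma tsum_rpow_gammaSeq_add_ne_top (hN : IsPseudoNorm N) (hs : s < s₁) {q : ℝ} (hq : 1 ≤ q)
    (hf : sigmaNorm N s (ENNReal.ofReal q) f ≠ ⊤) :
    ∑' p, ENNReal.ofReal (gammaSeq N s s₁ f p + gammaSeq N s s₁ f (p + 1)) ^ q ≠ ⊤ := by
  have hq0 : 0 < q := by linarith
  set lam : ℝ≥0∞ := ENNReal.ofReal ((2 : ℝ) ^ (-(s₁ - s)))
  have hlam : lam < 1 :=
    ENNReal.ofReal_lt_one.2 (Real.rpow_lt_one_of_one_lt_of_neg one_lt_two (by linarith))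
  have hγ : lqNorm q (fun p => ENNReal.ofReal (gammaSeq N s s₁ f p)) ≠ ⊤ := by
    refine ne_top_of_le_ne_top ?_ ((lqNorm_mono hq0.le (ofReal_gammaSeq_le hN)).trans
      (lqNorm_conv_le hq lam _))
    rw [← sigmaNorm_ofReal N s hq0.le]
    exact ENNReal.mul_ne_top (ENNReal.mul_ne_top ENNReal.ofNat_ne_top
      (ENNReal.inv_ne_top.2 (tsub_pos_of_lt hlam).ne')) hf
  rw [← lqNorm_ne_top_iff hq0]
  refine ne_top_of_le_ne_top (ENNReal.add_ne_top.2 ⟨hγ, ne_top_of_le_ne_top hγ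
    (lqNorm_comp_add_le hq0.le _ 1)⟩) (le_of_eq_of_le ?_ (lqNorm_add_le hq _ _))
  congr 1 with p
  exact ENNReal.ofReal_add (gammaSeq_nonneg hN p) (gammaSeq_nonneg hN (p + 1))

end Gamma

section StepBound

variable {E F : Type*} [AddCommGroup E] [Module ℝ E]
  {NE : E → ℝ} {NF : F → ℝ} {s₀ s s₁ C₀ C₁ : ℝ} {f : ℕ → E} {p : ℕ}

lemma two_rpow_mul_le_of_lipschitz (hNE : IsPseudoNorm NE) (hC₀ : 0 ≤ C₀) {u : ℕ → F}
    (hu : sigmaNorm NF s₀ ⊤ u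
      ≤ ENNReal.ofReal C₀ * sigmaNorm NE s₀ 1 (smoothS (p + 1) f - smoothS p f)) (k : ℕ) :
    (2 : ℝ) ^ ((k : ℝ) * s) * NF (u k)
      ≤ C₀ * (2 : ℝ) ^ (((k : ℝ) - (p + 1)) * (s - s₀)) * gammaSeq NE s s₁ f (p + 1) := by
  rw [smoothS_succ_sub_smoothS, sigmaNorm_one_single hNE.map_zero,
    ← ENNReal.ofReal_mul hC₀] at hu
  have hlip := two_rpow_mul_le_of_sigmaNorm_top_le hu
    (mul_nonneg hC₀ (mul_nonneg (by positivity) (hNE.nonneg _))) k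
  calc (2 : ℝ) ^ ((k : ℝ) * s) * NF (u k)
      = (2 : ℝ) ^ ((k : ℝ) * (s - s₀)) * ((2 : ℝ) ^ ((k : ℝ) * s₀) * NF (u k)) := by
        rw [← mul_assoc, ← Real.rpow_add two_pos]
        ring_nf
    _ ≤ (2 : ℝ) ^ ((k : ℝ) * (s - s₀)) *
        (C₀ * ((2 : ℝ) ^ (((p + 1 : ℕ) : ℝ) * s₀) * NE (f (p + 1)))) := by gcongr
    _ = C₀ * (2 : ℝ) ^ (((k : ℝ) - (p + 1)) * (s - s₀)) *
        ((2 : ℝ) ^ (((p + 1 : ℕ) : ℝ) * s) * NE (f (p + 1))) := by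
        rw [mul_left_comm, mul_assoc, ← mul_assoc (2 ^ _), ← Real.rpow_add two_pos,
          ← mul_assoc (2 ^ (((k : ℝ) - (p + 1)) * (s - s₀))), ← Real.rpow_add two_pos]
        push_cast
        ring_nf
    _ ≤ _ := by gcongr; exact two_rpow_mul_le_gammaSeq hNE (p + 1)

lemma two_rpow_mul_le_of_tame (hNE : IsPseudoNorm NE) (hC₁ : 0 ≤ C₁) {w : ℕ → F}
    (hw : sigmaNorm NF s₁ ⊤ w ≤ ENNReal.ofReal C₁ * sigmaNorm NE s₁ 1 (smoothS p f)) (k : ℕ) :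
    (2 : ℝ) ^ ((k : ℝ) * s) * NF (w k)
      ≤ C₁ * (2 : ℝ) ^ (-(((k : ℝ) - p) * (s₁ - s))) * gammaSeq NE s s₁ f p := by
  rw [sigmaNorm_one_smoothS_eq_gammaSeq (s := s) hNE, ← ENNReal.ofReal_mul hC₁] at hw
  have htame := two_rpow_mul_le_of_sigmaNorm_top_le hw
    (mul_nonneg hC₁ (mul_nonneg (by positivity) (gammaSeq_nonneg hNE p))) k
  calc (2 : ℝ) ^ ((k : ℝ) * s) * NF (w k)
      = (2 : ℝ) ^ (-((k : ℝ) * (s₁ - s))) * ((2 : ℝ) ^ ((k : ℝ) * s₁) * NF (w k)) := by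
        rw [← mul_assoc, ← Real.rpow_add two_pos]
        ring_nf
    _ ≤ (2 : ℝ) ^ (-((k : ℝ) * (s₁ - s))) *
        (C₁ * ((2 : ℝ) ^ ((p : ℝ) * (s₁ - s)) * gammaSeq NE s s₁ f p)) := by gcongr
    _ = _ := by
        rw [mul_left_comm, ← mul_assoc (2 ^ _), ← Real.rpow_add two_pos]
        ring_nf

lemma two_rpow_mul_norm_sub_le_of_tame [AddCommGroup F] [Module ℝ F] (hNE : IsPseudoNorm NE)
    (hNF : IsPseudoNorm NF) (hC₁ : 0 ≤ C₁) {κ : ℝ} (hκs₁ : κ ≤ s₁ - s) {w₀ w₁ : ℕ → F}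
    (htame₀ : sigmaNorm NF s₁ ⊤ w₀ ≤ ENNReal.ofReal C₁ * sigmaNorm NE s₁ 1 (smoothS p f))
    (htame₁ : sigmaNorm NF s₁ ⊤ w₁ ≤ ENNReal.ofReal C₁ * sigmaNorm NE s₁ 1 (smoothS (p + 1) f))
    {k : ℕ} (hpk : p < k) :
    (2 : ℝ) ^ ((k : ℝ) * s) * NF ((w₁ - w₀) k)
      ≤ (1 + (2 : ℝ) ^ (s₁ - s)) * C₁ * (2 : ℝ) ^ (-(κ * Nat.dist k p))
        * (gammaSeq NE s s₁ f p + gammaSeq NE s s₁ f (p + 1)) := by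
  set D := (2 : ℝ) ^ (-(κ * Nat.dist k p))
  set a := (2 : ℝ) ^ (-(((k : ℝ) - p) * (s₁ - s)))
  have ha : a ≤ D := by
    refine Real.rpow_le_rpow_of_exponent_le one_le_two ?_
    have : (p : ℝ) ≤ k := by exact_mod_cast hpk.le
    rw [Nat.dist_eq_sub_of_le_right hpk.le, Nat.cast_sub hpk.le]
    nlinarith
  have htame₁' := two_rpow_mul_le_of_tame (s := s) hNE hC₁ htame₁ k
  rw [show -(((k : ℝ) - ((p + 1 : ℕ) : ℝ)) * (s₁ - s)) = (s₁ - s) + -(((k : ℝ) - p) * (s₁ - s))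
    by push_cast; ring, Real.rpow_add two_pos] at htame₁'
  have hγ₀ := gammaSeq_nonneg hNE (s := s) (s₁ := s₁) (f := f) p
  have hγ₁ := gammaSeq_nonneg hNE (s := s) (s₁ := s₁) (f := f) (p + 1)
  calc (2 : ℝ) ^ ((k : ℝ) * s) * NF ((w₁ - w₀) k)
      ≤ (2 : ℝ) ^ ((k : ℝ) * s) * NF (w₁ k) + (2 : ℝ) ^ ((k : ℝ) * s) * NF (w₀ k) := by
        rw [← mul_add]
        exact mul_le_mul_of_nonneg_left (hNF.sub_le _ _) (by positivity)
    _ ≤ C₁ * ((2 : ℝ) ^ (s₁ - s) * a) * gammaSeq NE s s₁ f (p + 1)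
        + C₁ * a * gammaSeq NE s s₁ f p :=
        add_le_add htame₁' (two_rpow_mul_le_of_tame hNE hC₁ htame₀ k)
    _ ≤ C₁ * ((2 : ℝ) ^ (s₁ - s) * D) * gammaSeq NE s s₁ f (p + 1)
        + C₁ * D * gammaSeq NE s s₁ f p := by gcongr
    _ ≤ _ := by
        have : 0 ≤ C₁ * D * (2 : ℝ) ^ (s₁ - s) := by positivity
        have : 0 ≤ C₁ * D := by positivity
        nlinarith

lemma two_rpow_mul_norm_step_le [AddCommGroup F] [Module ℝ F] (hNE : IsPseudoNorm NE)
    (hNF : IsPseudoNorm NF) (hC₀ : 0 ≤ C₀) (hC₁ : 0 ≤ C₁) {κ : ℝ} (hκ : 0 ≤ κ)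
    (hκs₀ : κ ≤ s - s₀) (hκs₁ : κ ≤ s₁ - s) {w₀ w₁ : ℕ → F}
    (hlip : sigmaNorm NF s₀ ⊤ (w₁ - w₀)
      ≤ ENNReal.ofReal C₀ * sigmaNorm NE s₀ 1 (smoothS (p + 1) f - smoothS p f))
    (htame₀ : sigmaNorm NF s₁ ⊤ w₀ ≤ ENNReal.ofReal C₁ * sigmaNorm NE s₁ 1 (smoothS p f))
    (htame₁ : sigmaNorm NF s₁ ⊤ w₁ ≤ ENNReal.ofReal C₁ * sigmaNorm NE s₁ 1 (smoothS (p + 1) f))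
    (k : ℕ) :
    (2 : ℝ) ^ ((k : ℝ) * s) * NF ((w₁ - w₀) k)
      ≤ max C₀ ((1 + (2 : ℝ) ^ (s₁ - s)) * C₁) * (2 : ℝ) ^ (-(κ * Nat.dist k p))
        * (gammaSeq NE s s₁ f p + gammaSeq NE s s₁ f (p + 1)) := by
  have hγ₀ := gammaSeq_nonneg hNE (s := s) (s₁ := s₁) (f := f) p
  have hγ₁ := gammaSeq_nonneg hNE (s := s) (s₁ := s₁) (f := f) (p + 1)
  rcases le_or_gt k p with hkp | hpk
  · have hexp : ((k : ℝ) - (p + 1)) * (s - s₀) ≤ -(κ * Nat.dist k p) := by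
      have : (k : ℝ) ≤ p := by exact_mod_cast hkp
      rw [Nat.dist_eq_sub_of_le hkp, Nat.cast_sub hkp]
      nlinarith
    calc _ ≤ C₀ * (2 : ℝ) ^ (((k : ℝ) - (p + 1)) * (s - s₀)) * gammaSeq NE s s₁ f (p + 1) :=
          two_rpow_mul_le_of_lipschitz hNE hC₀ hlip k
      _ ≤ _ := by
          gcongr
          · exact le_max_left _ _
          · exact one_le_two
          · linarith
  · refine (two_rpow_mul_norm_sub_le_of_tame hNE hNF hC₁ hκs₁ htame₀ htame₁ hpk).trans ?_
    exact mul_le_mul_of_nonneg_right (mul_le_mul_of_nonneg_right (le_max_right _ _)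
      (by positivity)) (add_nonneg hγ₀ hγ₁)

end StepBound

section Summation

variable {F : Type*} [AddCommGroup F] [Module ℝ F] {N : F → ℝ} {s κ C : ℝ} {c : ℕ → ℝ}
  {y : ℕ → F} {x : ℕ → ℕ → F}

lemma ofReal_two_rpow_mul_le_of_step_le (hN : IsPseudoNorm N) (hC : 0 ≤ C)
    (hconv : ∀ k, Tendsto (fun m => ENNReal.ofReal (N ((y - x m) k))) atTop (𝓝 0))
    (hstep : ∀ p (k : ℕ), (2 : ℝ) ^ ((k : ℝ) * s) * N ((x (p + 1) - x p) k)
      ≤ C * (2 : ℝ) ^ (-(κ * Nat.dist k p)) * c p) (n k : ℕ) :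
    ENNReal.ofReal ((2 : ℝ) ^ ((k : ℝ) * s) * N ((y - x n) k))
      ≤ ENNReal.ofReal C * ∑' p, ENNReal.ofReal ((2 : ℝ) ^ (-κ)) ^ Nat.dist k p
        * (if n ≤ p then ENNReal.ofReal (c p) else 0) := by
  have hpow : ∀ p, ENNReal.ofReal ((2 : ℝ) ^ (-(κ * Nat.dist k p)))
      = ENNReal.ofReal ((2 : ℝ) ^ (-κ)) ^ Nat.dist k p := fun p => by
    rw [← neg_mul, Real.rpow_mul_natCast two_pos.le, ENNReal.ofReal_pow (by positivity)]
  calc ENNReal.ofReal ((2 : ℝ) ^ ((k : ℝ) * s) * N ((y - x n) k))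
      ≤ ENNReal.ofReal ((2 : ℝ) ^ ((k : ℝ) * s))
        * ∑' i, ENNReal.ofReal (N ((x (n + i + 1) - x (n + i)) k)) := by
        rw [ENNReal.ofReal_mul (by positivity)]
        exact mul_le_mul' le_rfl (hN.ofReal_le_tsum_of_tendsto (hconv k) n)
    _ = ∑' i, ENNReal.ofReal ((2 : ℝ) ^ ((k : ℝ) * s) * N ((x (n + i + 1) - x (n + i)) k)) := by
        rw [← ENNReal.tsum_mul_left]
        exact tsum_congr fun i => (ENNReal.ofReal_mul (by positivity)).symm
    _ ≤ ∑' i, ENNReal.ofReal C * (ENNReal.ofReal ((2 : ℝ) ^ (-κ)) ^ Nat.dist k (n + i)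
        * ENNReal.ofReal (c (n + i))) := by
        gcongr with i
        refine (ENNReal.ofReal_le_ofReal (hstep (n + i) k)).trans_eq ?_
        rw [ENNReal.ofReal_mul (by positivity), ENNReal.ofReal_mul hC, hpow, mul_assoc]
    _ = _ := by simp_rw [mul_ite, mul_zero, tsum_ite_le_eq_tsum_nat_add, ENNReal.tsum_mul_left]

lemma sigmaNorm_sub_le_of_step_le (hN : IsPseudoNorm N) (hκ : 0 < κ) (hC : 0 ≤ C) {q : ℝ}
    (hq : 1 ≤ q) (hconv : ∀ k, Tendsto (fun m => ENNReal.ofReal (N ((y - x m) k))) atTop (𝓝 0))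
    (hstep : ∀ p (k : ℕ), (2 : ℝ) ^ ((k : ℝ) * s) * N ((x (p + 1) - x p) k)
      ≤ C * (2 : ℝ) ^ (-(κ * Nat.dist k p)) * c p) (n : ℕ) :
    sigmaNorm N s (ENNReal.ofReal q) (y - x n)
      ≤ ENNReal.ofReal (2 / (1 - (2 : ℝ) ^ (-κ)) * C)
        * (∑' p, ENNReal.ofReal (c (n + p)) ^ q) ^ (1 / q) := by
  have hq0 : 0 < q := by linarith
  have hlam : (2 : ℝ) ^ (-κ) < 1 := Real.rpow_lt_one_of_one_lt_of_neg one_lt_two (by linarith)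
  set lam : ℝ≥0∞ := ENNReal.ofReal ((2 : ℝ) ^ (-κ))
  set d : ℕ → ℝ≥0∞ := fun p => if n ≤ p then ENNReal.ofReal (c p) else 0
  have hd : lqNorm q d = (∑' p, ENNReal.ofReal (c (n + p)) ^ q) ^ (1 / q) := by
    have : ∀ p, d p ^ q = if n ≤ p then ENNReal.ofReal (c p) ^ q else 0 := fun p => by
      simp only [d]
      split_ifs <;> simp [hq0]
    simp_rw [lqNorm, this, tsum_ite_le_eq_tsum_nat_add]
  have hA : ENNReal.ofReal (2 / (1 - (2 : ℝ) ^ (-κ))) = 2 * (1 - lam)⁻¹ := by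
    rw [ENNReal.ofReal_div_of_pos (by linarith), ENNReal.ofReal_sub _ (by positivity),
      ENNReal.ofReal_one, ENNReal.ofReal_ofNat, div_eq_mul_inv]
  rw [sigmaNorm_ofReal N s hq0.le, ENNReal.ofReal_mul (by positivity), hA, ← hd]
  calc lqNorm q (fun k => ENNReal.ofReal ((2 : ℝ) ^ ((k : ℝ) * s) * N ((y - x n) k)))
      ≤ lqNorm q (fun k => ENNReal.ofReal C * ∑' p, lam ^ Nat.dist k p * d p) :=
        lqNorm_mono hq0.le (ofReal_two_rpow_mul_le_of_step_le hN hC hconv hstep n)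
    _ = ENNReal.ofReal C * lqNorm q (fun k => ∑' p, lam ^ Nat.dist k p * d p) :=
        lqNorm_const_mul hq0 _ _
    _ ≤ ENNReal.ofReal C * (2 * (1 - lam)⁻¹ * lqNorm q d) := by
        gcongr
        exact lqNorm_conv_le hq lam d
    _ = 2 * (1 - lam)⁻¹ * ENNReal.ofReal C * lqNorm q d := by ring

end Summation

theorem Phi_smoothS_tail_bound_general
    {E F : Type*} [AddCommGroup E] [Module ℝ E] [AddCommGroup F] [Module ℝ F]
    (NE : E → ℝ) (NF : F → ℝ) (hNE : IsPseudoNorm NE) (hNF : IsPseudoNorm NF)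
    (s₀ s s₁ : ℝ) (hs₀ : s₀ < s) (hs₁ : s < s₁)
    (q : ℝ) (hq : 1 ≤ q) (r : ℝ)
    (Φ : (ℕ → E) → (ℕ → F))
    (C₀ : ℝ) (hC₀ : 0 < C₀)
    (hlip : ∀ v w, memSigma NE s (ENNReal.ofReal q) v →
      sigmaNorm NE s (ENNReal.ofReal q) v < ENNReal.ofReal r →
      memSigma NE s (ENNReal.ofReal q) w →
      sigmaNorm NE s (ENNReal.ofReal q) w < ENNReal.ofReal r →
      sigmaNorm NF s₀ ⊤ (Φ v - Φ w) ≤ ENNReal.ofReal C₀ * sigmaNorm NE s₀ 1 (v - w))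
    (C₁ : ℝ) (hC₁ : 0 < C₁)
    (htame : ∀ v, (∀ σ : ℝ, memSigma NE σ 1 v) →
      memSigma NE s (ENNReal.ofReal q) v →
      sigmaNorm NE s (ENNReal.ofReal q) v < ENNReal.ofReal r →
      sigmaNorm NF s₁ ⊤ (Φ v) ≤ ENNReal.ofReal C₁ * sigmaNorm NE s₁ 1 v)
    (κ C A : ℝ) (hκ : κ = min (s₁ - s) (s - s₀))
    (hC : C = max C₀ ((1 + (2 : ℝ) ^ (s₁ - s)) * C₁))
    (hA : A = 2 / (1 - (2 : ℝ) ^ (-κ)))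
    (f : ℕ → E) (hfmem : memSigma NE s (ENNReal.ofReal q) f)
    (hfball : sigmaNorm NE s (ENNReal.ofReal q) f < ENNReal.ofReal r)
    (γ c : ℕ → ℝ)
    (hγ : ∀ p : ℕ, γ p = (2 : ℝ) ^ (-((p : ℝ) * (s₁ - s))) *
      ∑ k ∈ Finset.range (p + 1), (2 : ℝ) ^ ((k : ℝ) * s₁) * NE (f k))
    (hc : ∀ p : ℕ, c p = γ p + γ (p + 1)) :
    (∀ n : ℕ,
      memSigma NF s (ENNReal.ofReal q) (Φ f - Φ (smoothS n f)) ∧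
      sigmaNorm NF s (ENNReal.ofReal q) (Φ f - Φ (smoothS n f))
        ≤ ENNReal.ofReal (A * C) *
            (∑' p : ℕ, ENNReal.ofReal (c (n + p)) ^ q) ^ (1 / q)) ∧
    Tendsto (fun n : ℕ => sigmaNorm NF s (ENNReal.ofReal q) (Φ f - Φ (smoothS n f)))
      atTop (nhds 0) := by
  obtain rfl : γ = gammaSeq NE s s₁ f := funext hγ
  obtain rfl : c = fun p => gammaSeq NE s s₁ f p + gammaSeq NE s s₁ f (p + 1) := funext hc
  subst hκ hC hA
  have hq0 : 0 < q := by linarith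
  have hf : sigmaNorm NE s (ENNReal.ofReal q) f ≠ ⊤ := ((memSigma_ofReal _ _ _ _).1 hfmem).ne
  have hball : ∀ m, sigmaNorm NE s (ENNReal.ofReal q) (smoothS m f) < ENNReal.ofReal r :=
    fun m => (sigmaNorm_smoothS_le hNE _ _ m f).trans_lt hfball
  have hmem : ∀ m, memSigma NE s (ENNReal.ofReal q) (smoothS m f) := fun m =>
    (memSigma_ofReal _ _ _ _).2 ((hball m).trans ENNReal.ofReal_lt_top)
  have hbound := sigmaNorm_sub_le_of_step_le (s := s) (κ := min (s₁ - s) (s - s₀)) hNF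
    (lt_min (by linarith) (by linarith)) (hC₀.le.trans (le_max_left _ _)) hq
    (tendsto_ofReal_apply_of_lipschitz hNE hs₀ hq0 hf fun m =>
      hlip _ _ hfmem hfball (hmem m) (hball m))
    fun p k => two_rpow_mul_norm_step_le hNE hNF hC₀.le hC₁.le
      (le_min (by linarith) (by linarith)) (min_le_right _ _) (min_le_left _ _)
      (hlip _ _ (hmem (p + 1)) (hball (p + 1)) (hmem p) (hball p))
      (htame _ (memSigma_one_smoothS hNE · p f) (hmem p) (hball p))
      (htame _ (memSigma_one_smoothS hNE · (p + 1) f) (hmem (p + 1)) (hball (p + 1))) k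
  have hfin := tsum_rpow_gammaSeq_add_ne_top hNE hs₁ hq hf
  refine ⟨fun n => ⟨(memSigma_ofReal _ _ _ _).2 ((hbound n).trans_lt ?_), hbound n⟩, ?_⟩
  · exact ENNReal.mul_lt_top ENNReal.ofReal_lt_top (ENNReal.rpow_lt_top_of_nonneg (by positivity)
      (ne_top_of_le_ne_top hfin
        (ENNReal.tsum_comp_le_tsum_of_injective (add_right_injective n) _)))
  · exact tendsto_of_tendsto_of_tendsto_of_le_of_le tendsto_const_nhds
      (tendsto_const_mul_tsum_nat_add_rpow hq0 hfin ENNReal.ofReal_ne_top) (fun _ => bot_le) hbound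

/-- Estimate (3.13): with `κ = min(s₁-s, s-s₀)`, `C = max(C₀, (1+2^{s₁-s})C₁)` and
`A = 2/(1-2^{-κ})`, for `f ∈ B_{s,q}(0,r)` (with `q ∈ [1,∞)`),
`γ_p := 2^{-p(s₁-s)} ∑_{k≤p} 2^{k s₁}‖f_k‖_E` and `c_p := γ_p + γ_{p+1}`, the sequence
`Φ(f) - Φ(S_n f)` belongs to `Σ^s_q(F)` with
`‖Φ(f) - Φ(S_n f)‖_{Σ^s_q} ≤ A C (∑_{p≥n} c_p^q)^{1/q}`, and this tends to `0`. -/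
theorem Phi_smoothS_tail_bound
    {E F : Type*} [AddCommGroup E] [Module ℝ E] [AddCommGroup F] [Module ℝ F]
    (NE : E → ℝ) (NF : F → ℝ) (hNE : IsPseudoNorm NE) (hNF : IsPseudoNorm NF)
    (s₀ s s₁ : ℝ) (hs₀ : s₀ < s) (hs₁ : s < s₁)
    (q : ℝ) (hq : 1 ≤ q) (r : ℝ) (hr : 0 < r)
    (Φ : (ℕ → E) → (ℕ → F))
    (hΦmem : ∀ v, memSigma NE s (ENNReal.ofReal q) v →
      sigmaNorm NE s (ENNReal.ofReal q) v < ENNReal.ofReal r →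
      memSigma NF s₀ ⊤ (Φ v))
    (C₀ : ℝ) (hC₀ : 0 < C₀)
    (hlip : ∀ v w, memSigma NE s (ENNReal.ofReal q) v →
      sigmaNorm NE s (ENNReal.ofReal q) v < ENNReal.ofReal r →
      memSigma NE s (ENNReal.ofReal q) w →
      sigmaNorm NE s (ENNReal.ofReal q) w < ENNReal.ofReal r →
      sigmaNorm NF s₀ ⊤ (Φ v - Φ w) ≤ ENNReal.ofReal C₀ * sigmaNorm NE s₀ 1 (v - w))
    (C₁ : ℝ) (hC₁ : 0 < C₁)
    (htame : ∀ v, (∀ σ : ℝ, memSigma NE σ 1 v) →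
      memSigma NE s (ENNReal.ofReal q) v →
      sigmaNorm NE s (ENNReal.ofReal q) v < ENNReal.ofReal r →
      sigmaNorm NF s₁ ⊤ (Φ v) ≤ ENNReal.ofReal C₁ * sigmaNorm NE s₁ 1 v)
    (κ C A : ℝ) (hκ : κ = min (s₁ - s) (s - s₀))
    (hC : C = max C₀ ((1 + (2 : ℝ) ^ (s₁ - s)) * C₁))
    (hA : A = 2 / (1 - (2 : ℝ) ^ (-κ)))
    (f : ℕ → E) (hfmem : memSigma NE s (ENNReal.ofReal q) f)
    (hfball : sigmaNorm NE s (ENNReal.ofReal q) f < ENNReal.ofReal r)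
    (γ c : ℕ → ℝ)
    (hγ : ∀ p : ℕ, γ p = (2 : ℝ) ^ (-((p : ℝ) * (s₁ - s))) *
      ∑ k ∈ Finset.range (p + 1), (2 : ℝ) ^ ((k : ℝ) * s₁) * NE (f k))
    (hc : ∀ p : ℕ, c p = γ p + γ (p + 1)) :
    (∀ n : ℕ,
      memSigma NF s (ENNReal.ofReal q) (Φ f - Φ (smoothS n f)) ∧
      sigmaNorm NF s (ENNReal.ofReal q) (Φ f - Φ (smoothS n f))
        ≤ ENNReal.ofReal (A * C) *
            (∑' p : ℕ, ENNReal.ofReal (c (n + p)) ^ q) ^ (1 / q)) ∧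
    Tendsto (fun n : ℕ => sigmaNorm NF s (ENNReal.ofReal q) (Φ f - Φ (smoothS n f)))
      atTop (nhds 0) :=
  Phi_smoothS_tail_bound_general NE NF hNE hNF s₀ s s₁ hs₀ hs₁ q hq r Φ C₀ hC₀ hlip C₁ hC₁ htame κ C
    A hκ hC hA f hfmem hfball γ c hγ hc
end

section
/- Let E be a pseudo-normed real vector space and F a Banach space (a complete normed real vector space). Let s_0 < s < s_1 be real numbers, q ∈ [1,∞], r > 0, and let Φ : B_{s,q}(0,r) → Σ^{s_0}_∞(F) be continuous (with respect to the distances induced by ‖·‖_{Σ^s_q(E)} and ‖·‖_{Σ^{s_0}_∞(F)}) and satisfy the tame estimate together with the following weak contraction for smooth data: there exists C₀ > 0 such that ‖Φ(v) − Φ(w)‖_{Σ^{s_0}_∞(F)} ≤ C₀ ‖v − w‖_{Σ^{s_0}_1(E)} for all v, w ∈ Σ^∞_1(E) ∩ B_{s,q}(0,r). Then Φ(v) ∈ Σ^s_q(F) for all v ∈ B_{s,q}(0,r), and the mapping Φ : B_{s,q}(0,r) → Σ^s_q(F) is continuous. -/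
open Filter
open scoped ENNReal NNReal

open Topology

/-!
Write `a_k = 2 ^ (k s) N(v_k)` and let `S_n` truncate a sequence after index `n`. Telescoping
`Φ(v)_k` along `Φ(S_k v), Φ(S_{k+1} v), …`, which tends to `Φ(v)` in `Σ^{s₀}_∞` by continuity,
the tame estimate bounds the first term and the weak contraction estimate each increment; this
gives the pointwise bound `2 ^ (k s) ‖Φ(v)_k‖ ≤ (C₀ + C₁) ∑_j t ^ |k - j| a_j` with
`t = 2 ^ (-min (s₁ - s) (s - s₀)) < 1`. By Schur's test this convolution is bounded on `ℓ^q` and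
keeps tails small (so it preserves `c₀` when `q = ∞`), hence `Φ(v) ∈ Σ^s_q`. For continuity at
`f`, the frequencies `k ≤ K` of `Φ(g) - Φ(f)` are controlled by the continuity into `Σ^{s₀}_∞`,
and the frequencies `k > K` by the convolution bound, which is small for large `K` uniformly
for `g` near `f`.
-/

theorem ENNReal.tsum_mul_rpow_le_weight_mul {ι : Type*} {p : ℝ} (hp : 1 ≤ p)
    (w f : ι → ℝ≥0∞) :
    (∑' i, w i * f i) ^ p ≤ (∑' i, w i) ^ (p - 1) * ∑' i, w i * f i ^ p := by
  have hp₀ : 0 < p := zero_lt_one.trans_le hp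
  have holder : ∑' i, w i * f i ≤ (∑' i, w i) ^ (1 - p⁻¹) * (∑' i, w i * f i ^ p) ^ p⁻¹ := by
    rw [ENNReal.tsum_eq_iSup_sum]
    refine iSup_le fun s => (ENNReal.inner_le_weight_mul_Lp_of_nonneg s hp w f).trans ?_
    have : 0 ≤ 1 - p⁻¹ := sub_nonneg.2 (inv_le_one_of_one_le₀ hp)
    gcongr <;> exact ENNReal.sum_le_tsum s
  calc (∑' i, w i * f i) ^ p
      ≤ ((∑' i, w i) ^ (1 - p⁻¹) * (∑' i, w i * f i ^ p) ^ p⁻¹) ^ p := by gcongr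
    _ = (∑' i, w i) ^ (p - 1) * ∑' i, w i * f i ^ p := by
      rw [ENNReal.mul_rpow_of_nonneg _ _ hp₀.le, ENNReal.rpow_inv_rpow hp₀.ne',
        ← ENNReal.rpow_mul, sub_mul, one_mul, inv_mul_cancel₀ hp₀.ne']

theorem ENNReal.tsum_rpow_le_rpow_tsum {ι : Type*} {p : ℝ} (hp : 1 ≤ p) (a : ι → ℝ≥0∞) :
    ∑' i, a i ^ p ≤ (∑' i, a i) ^ p := by
  have hsplit : ∀ x : ℝ≥0∞, x ^ p = x * x ^ (p - 1) := fun x => by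
    conv_lhs => rw [← add_sub_cancel 1 p]
    rw [ENNReal.rpow_add_of_nonneg _ _ zero_le_one (by linarith), ENNReal.rpow_one]
  calc ∑' i, a i ^ p = ∑' i, a i * a i ^ (p - 1) := by simp only [hsplit]
    _ ≤ ∑' i, a i * (∑' j, a j) ^ (p - 1) := by
      gcongr with i
      exact ENNReal.le_tsum i
    _ = (∑' i, a i) ^ p := by rw [ENNReal.tsum_mul_right, hsplit]

theorem ENNReal.sum_range_add_tsum_nat_add (f : ℕ → ℝ≥0∞) (k : ℕ) :
    ∑ i ∈ Finset.range k, f i + ∑' i, f (i + k) = ∑' i, f i :=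
  ENNReal.summable.sum_add_tsum_nat_add'

theorem ENNReal.exists_pos_mul_ofReal_lt {a b : ℝ≥0∞} (ha : a ≠ ⊤) (hb : 0 < b) :
    ∃ δ : ℝ, 0 < δ ∧ a * ENNReal.ofReal δ < b := by
  obtain ⟨n, hn, hlt⟩ := ENNReal.exists_nnreal_pos_mul_lt ha hb.ne'
  exact ⟨n, hn, by rwa [ENNReal.ofReal_coe_nnreal, mul_comm]⟩

theorem enorm_le_add_tsum_of_tendsto {F : Type*} [NormedAddCommGroup F] {u : ℕ → F} {y : F}
    (h : Tendsto u atTop (𝓝 y)) :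
    ‖y‖ₑ ≤ ‖u 0‖ₑ + ∑' i, ‖u (i + 1) - u i‖ₑ := by
  have hpartial : ∀ n, ‖u n‖ₑ ≤ ‖u 0‖ₑ + ∑ i ∈ Finset.range n, ‖u (i + 1) - u i‖ₑ := by
    intro n
    induction n with
    | zero => simp
    | succ n ih =>
      calc ‖u (n + 1)‖ₑ = ‖u n + (u (n + 1) - u n)‖ₑ := by rw [add_sub_cancel]
        _ ≤ ‖u n‖ₑ + ‖u (n + 1) - u n‖ₑ := enorm_add_le (u n) (u (n + 1) - u n)
        _ ≤ _ := by
          rw [Finset.sum_range_succ, ← add_assoc]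
          gcongr
  refine le_of_tendsto' h.enorm fun n => (hpartial n).trans ?_
  gcongr
  exact ENNReal.sum_le_tsum _

namespace SigmaSpace

/-! ### `ℓ^q` norms of sequences in `ℝ≥0∞` -/

noncomputable def lqNorm (q : ℝ≥0∞) (a : ℕ → ℝ≥0∞) : ℝ≥0∞ :=
  if q = ⊤ then ⨆ k, a k else (∑' k, a k ^ q.toReal) ^ (1 / q.toReal)

variable {q : ℝ≥0∞} {a b : ℕ → ℝ≥0∞}

theorem lqNorm_top (a : ℕ → ℝ≥0∞) : lqNorm ⊤ a = ⨆ k, a k := if_pos rfl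

theorem lqNorm_of_ne_top (hq : q ≠ ⊤) (a : ℕ → ℝ≥0∞) :
    lqNorm q a = (∑' k, a k ^ q.toReal) ^ (1 / q.toReal) := if_neg hq

theorem lqNorm_one (a : ℕ → ℝ≥0∞) : lqNorm 1 a = ∑' k, a k := by
  simp [lqNorm_of_ne_top ENNReal.one_ne_top]

theorem lqNorm_mono (h : a ≤ b) : lqNorm q a ≤ lqNorm q b := by
  unfold lqNorm
  split_ifs
  · exact iSup_mono h
  · gcongr with k
    exact h k

theorem lqNorm_indicator_le (s : Set ℕ) (a : ℕ → ℝ≥0∞) : lqNorm q (s.indicator a) ≤ lqNorm q a :=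
  lqNorm_mono (Set.indicator_le_self s a)

theorem le_lqNorm (hq : q ≠ 0) (a : ℕ → ℝ≥0∞) (k : ℕ) : a k ≤ lqNorm q a := by
  rcases eq_or_ne q ⊤ with rfl | hq'
  · exact (lqNorm_top a).symm ▸ le_iSup a k
  have hα : q.toReal ≠ 0 := (ENNReal.toReal_pos hq hq').ne'
  rw [lqNorm_of_ne_top hq', one_div]
  calc a k = (a k ^ q.toReal) ^ q.toReal⁻¹ := (ENNReal.rpow_rpow_inv hα _).symm
    _ ≤ (∑' k, a k ^ q.toReal) ^ q.toReal⁻¹ := by gcongr; exact ENNReal.le_tsum k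

theorem lqNorm_const_mul (hq : q ≠ 0) (c : ℝ≥0∞) (a : ℕ → ℝ≥0∞) :
    lqNorm q (fun k => c * a k) = c * lqNorm q a := by
  rcases eq_or_ne q ⊤ with rfl | hq'
  · simp only [lqNorm_top, ENNReal.mul_iSup]
  have hα : 0 < q.toReal := ENNReal.toReal_pos hq hq'
  simp only [lqNorm_of_ne_top hq', ENNReal.mul_rpow_of_nonneg _ _ hα.le, ENNReal.tsum_mul_left,
    one_div, ENNReal.mul_rpow_of_nonneg _ _ (inv_nonneg.2 hα.le),
    ENNReal.rpow_rpow_inv hα.ne']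

theorem lqNorm_add_le (hq : 1 ≤ q) (a b : ℕ → ℝ≥0∞) :
    lqNorm q (a + b) ≤ lqNorm q a + lqNorm q b := by
  rcases eq_or_ne q ⊤ with rfl | hq'
  · simp only [lqNorm_top, Pi.add_apply]
    exact iSup_le fun k => add_le_add (le_iSup a k) (le_iSup b k)
  have h := ENNReal.lintegral_Lp_add_le (μ := MeasureTheory.Measure.count)
    (measurable_of_countable a).aemeasurable (measurable_of_countable b).aemeasurable
    (ENNReal.toReal_mono hq' hq)
  simpa [lqNorm_of_ne_top hq', MeasureTheory.lintegral_count] using h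

theorem lqNorm_le_tsum (hq : 1 ≤ q) (a : ℕ → ℝ≥0∞) : lqNorm q a ≤ ∑' k, a k := by
  rcases eq_or_ne q ⊤ with rfl | hq'
  · exact (lqNorm_top a).symm ▸ iSup_le fun k => ENNReal.le_tsum k
  have hα : 1 ≤ q.toReal := by simpa using ENNReal.toReal_mono hq' hq
  rw [lqNorm_of_ne_top hq', one_div]
  calc (∑' k, a k ^ q.toReal) ^ q.toReal⁻¹
      ≤ ((∑' k, a k) ^ q.toReal) ^ q.toReal⁻¹ := by
        gcongr
        exact ENNReal.tsum_rpow_le_rpow_tsum hα a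
    _ = ∑' k, a k := ENNReal.rpow_rpow_inv (by linarith) _

theorem tsum_indicator_Iic (a : ℕ → ℝ≥0∞) (m : ℕ) :
    ∑' k, (Set.Iic m).indicator a k = ∑ k ∈ Finset.range (m + 1), a k := by
  rw [tsum_eq_sum (s := Finset.range (m + 1)) fun k hk =>
    Set.indicator_of_notMem (by simpa using hk) a]
  exact Finset.sum_congr rfl fun k hk =>
    Set.indicator_of_mem (Set.mem_Iic.2 (Finset.mem_range_succ_iff.1 hk)) a

theorem tsum_indicator_Ioi (a : ℕ → ℝ≥0∞) (m : ℕ) :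
    ∑' k, (Set.Ioi m).indicator a k = ∑' i, a (i + (m + 1)) := by
  rw [← ENNReal.sum_range_add_tsum_nat_add _ (m + 1),
    Finset.sum_eq_zero fun k hk => Set.indicator_of_notMem
      (by simpa using Finset.mem_range_succ_iff.1 hk) a, zero_add]
  exact tsum_congr fun i => Set.indicator_of_mem (by simp; omega) a

theorem indicator_Iic_add_indicator_Ioi {M : Type*} [AddMonoid M] (a : ℕ → M) (m : ℕ) :
    (Set.Iic m).indicator a + (Set.Ioi m).indicator a = a := by
  rw [← Set.compl_Iic, Set.indicator_self_add_compl]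

theorem lqNorm_le_head_add_tail (hq : 1 ≤ q) (m : ℕ) (a : ℕ → ℝ≥0∞) :
    lqNorm q a ≤ lqNorm q ((Set.Iic m).indicator a) + lqNorm q ((Set.Ioi m).indicator a) := by
  conv_lhs => rw [← indicator_Iic_add_indicator_Ioi a m]
  exact lqNorm_add_le hq _ _

theorem lqNorm_indicator_Iic_le (hq : 1 ≤ q) (m : ℕ) (a : ℕ → ℝ≥0∞) :
    lqNorm q ((Set.Iic m).indicator a) ≤ ∑ k ∈ Finset.range (m + 1), a k :=
  (lqNorm_le_tsum hq _).trans_eq (tsum_indicator_Iic a m)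

/-! ### Convolution with the kernel `t ^ |k - j|` -/

noncomputable def kernelConv (t : ℝ≥0∞) (a : ℕ → ℝ≥0∞) (k : ℕ) : ℝ≥0∞ :=
  ∑' j, t ^ Nat.dist k j * a j

variable {t : ℝ≥0∞}

theorem tsum_pow_dist_le (ht : t < 1) (k : ℕ) : ∑' j, t ^ Nat.dist k j ≤ 2 * (1 - t)⁻¹ := by
  rw [← ENNReal.sum_range_add_tsum_nat_add _ (k + 1), two_mul]
  gcongr
  · calc ∑ j ∈ Finset.range (k + 1), t ^ Nat.dist k j
        = ∑ j ∈ Finset.range (k + 1), t ^ (k + 1 - 1 - j) :=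
          Finset.sum_congr rfl fun j hj => by
            rw [Nat.dist_eq_sub_of_le_right (Finset.mem_range_succ_iff.1 hj), add_tsub_cancel_right]
      _ = ∑ j ∈ Finset.range (k + 1), t ^ j := Finset.sum_range_reflect (t ^ ·) (k + 1)
      _ ≤ ∑' j, t ^ j := ENNReal.sum_le_tsum _
      _ = (1 - t)⁻¹ := ENNReal.tsum_geometric t
  · calc ∑' i, t ^ Nat.dist k (i + (k + 1)) = ∑' i, t ^ i * t := by
          congr with i
          rw [Nat.dist_eq_sub_of_le (by omega), ← pow_succ]
          congr 1
          omega
      _ ≤ ∑' i, t ^ i := ENNReal.tsum_le_tsum fun i => mul_le_of_le_one_right' ht.le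
      _ = (1 - t)⁻¹ := ENNReal.tsum_geometric t

theorem two_mul_inv_one_sub_ne_top (ht : t < 1) : 2 * (1 - t)⁻¹ ≠ ⊤ :=
  ENNReal.mul_ne_top ENNReal.ofNat_ne_top (ENNReal.inv_ne_top.2 (tsub_pos_of_lt ht).ne')

theorem kernelConv_mono (h : a ≤ b) : kernelConv t a ≤ kernelConv t b := fun k =>
  ENNReal.tsum_le_tsum fun j => by gcongr; exact h j

theorem kernelConv_add (a b : ℕ → ℝ≥0∞) :
    kernelConv t (a + b) = kernelConv t a + kernelConv t b := by
  ext k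
  simp only [kernelConv, Pi.add_apply, mul_add, ENNReal.tsum_add]

/-- Schur's test for the kernel `t ^ |k - j|`, whose row and column sums are at most
`2 * (1 - t)⁻¹`. -/
theorem lqNorm_kernelConv_le (hq : 1 ≤ q) (ht : t < 1) (a : ℕ → ℝ≥0∞) :
    lqNorm q (kernelConv t a) ≤ 2 * (1 - t)⁻¹ * lqNorm q a := by
  set R : ℝ≥0∞ := 2 * (1 - t)⁻¹
  rcases eq_or_ne q ⊤ with rfl | hq'
  · simp only [lqNorm_top]
    refine iSup_le fun k => ?_
    calc kernelConv t a k ≤ ∑' j, t ^ Nat.dist k j * ⨆ i, a i :=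
          ENNReal.tsum_le_tsum fun j => by gcongr; exact le_iSup a j
      _ = (∑' j, t ^ Nat.dist k j) * ⨆ i, a i := ENNReal.tsum_mul_right
      _ ≤ R * ⨆ i, a i := by gcongr; exact tsum_pow_dist_le ht k
  set α := q.toReal
  have hα : 1 ≤ α := by simpa using ENNReal.toReal_mono hq' hq
  have hα₀ : 0 < α := zero_lt_one.trans_le hα
  have hrow : ∀ k, kernelConv t a k ^ α ≤ R ^ (α - 1) * ∑' j, t ^ Nat.dist k j * a j ^ α :=
    fun k => (ENNReal.tsum_mul_rpow_le_weight_mul hα _ _).trans <| by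
      gcongr
      exact tsum_pow_dist_le ht k
  have hsum : ∑' k, kernelConv t a k ^ α ≤ R ^ α * ∑' j, a j ^ α :=
    calc ∑' k, kernelConv t a k ^ α
        ≤ ∑' k, R ^ (α - 1) * ∑' j, t ^ Nat.dist k j * a j ^ α := ENNReal.tsum_le_tsum hrow
      _ = R ^ (α - 1) * ∑' j, (∑' k, t ^ Nat.dist j k) * a j ^ α := by
          rw [ENNReal.tsum_mul_left, ENNReal.tsum_comm]
          congr with j
          rw [← ENNReal.tsum_mul_right]
          simp only [Nat.dist_comm j]
      _ ≤ R ^ (α - 1) * ∑' j, R * a j ^ α := by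
          gcongr with j
          exact tsum_pow_dist_le ht j
      _ = R ^ α * ∑' j, a j ^ α := by
          have hR : R ^ (α - 1) * R = R ^ α := by
            conv_rhs => rw [← sub_add_cancel α 1]
            rw [ENNReal.rpow_add_of_nonneg _ _ (by linarith) zero_le_one, ENNReal.rpow_one]
          rw [ENNReal.tsum_mul_left, ← mul_assoc, hR]
  rw [lqNorm_of_ne_top hq', lqNorm_of_ne_top hq', one_div]
  calc (∑' k, kernelConv t a k ^ α) ^ α⁻¹ ≤ (R ^ α * ∑' j, a j ^ α) ^ α⁻¹ := by gcongr
    _ = R * (∑' j, a j ^ α) ^ α⁻¹ := by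
        rw [ENNReal.mul_rpow_of_nonneg _ _ (inv_nonneg.2 hα₀.le), ENNReal.rpow_rpow_inv hα₀.ne']

/-! ### Sequences with vanishing tails -/

/-- For `q < ∞` this says `a ∈ ℓ^q`, for `q = ∞` that `a ∈ c₀`. -/
def TailsVanish (q : ℝ≥0∞) (a : ℕ → ℝ≥0∞) : Prop :=
  Tendsto (fun m => lqNorm q ((Set.Ioi m).indicator a)) atTop (𝓝 0)

theorem TailsVanish.of_le_mul (hq : q ≠ 0) {C : ℝ≥0∞} (hC : C ≠ ⊤) (ha : TailsVanish q a)
    (h : ∀ k, b k ≤ C * a k) : TailsVanish q b := by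
  have hlim : Tendsto (fun m => C * lqNorm q ((Set.Ioi m).indicator a)) atTop (𝓝 0) := by
    simpa using ENNReal.Tendsto.const_mul ha (Or.inr hC)
  refine tendsto_of_tendsto_of_tendsto_of_le_of_le tendsto_const_nhds hlim (fun _ => zero_le)
    fun m => ?_
  rw [← lqNorm_const_mul hq]
  refine lqNorm_mono fun k => ?_
  by_cases hk : k ∈ Set.Ioi m <;> simp [hk, h k]

theorem tailsVanish_of_tsum_ne_top (hq : 1 ≤ q) (ha : ∑' k, a k ≠ ⊤) : TailsVanish q a := by
  have hlim : Tendsto (fun m => ∑' i, a (i + (m + 1))) atTop (𝓝 0) :=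
    (ENNReal.tendsto_sum_nat_add a ha).comp (tendsto_add_atTop_nat 1)
  refine tendsto_of_tendsto_of_tendsto_of_le_of_le tendsto_const_nhds hlim (fun _ => zero_le)
    fun m => ?_
  exact (lqNorm_le_tsum hq _).trans_eq (tsum_indicator_Ioi a m)

theorem tailsVanish_iff_lqNorm_lt_top (hq : 1 ≤ q) (hq' : q ≠ ⊤) (ha : ∀ k, a k ≠ ⊤) :
    TailsVanish q a ↔ lqNorm q a < ⊤ := by
  have hα : 0 < q.toReal := ENNReal.toReal_pos (zero_lt_one.trans_le hq).ne' hq'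
  constructor
  · intro h
    obtain ⟨m, hm⟩ := (h.eventually (gt_mem_nhds zero_lt_one)).exists
    calc lqNorm q a
        ≤ lqNorm q ((Set.Iic m).indicator a) + lqNorm q ((Set.Ioi m).indicator a) :=
          lqNorm_le_head_add_tail hq m a
      _ ≤ ∑ k ∈ Finset.range (m + 1), a k + 1 := add_le_add (lqNorm_indicator_Iic_le hq m a) hm.le
      _ < ⊤ := ENNReal.add_lt_top.2
          ⟨ENNReal.sum_lt_top.2 fun k _ => (ha k).lt_top, ENNReal.one_lt_top⟩
  · intro h
    have hpow : ∑' k, a k ^ q.toReal ≠ ⊤ := by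
      rw [lqNorm_of_ne_top hq'] at h
      simpa [hα] using h.ne
    have hlim := ((tailsVanish_of_tsum_ne_top le_rfl hpow).ennrpow_const (1 / q.toReal))
    rw [ENNReal.zero_rpow_of_pos (by positivity)] at hlim
    refine hlim.congr fun m => ?_
    rw [lqNorm_one, lqNorm_of_ne_top hq']
    congr 1
    refine tsum_congr fun k => ?_
    by_cases hk : k ∈ Set.Ioi m <;> simp [hk, hα]

theorem tailsVanish_top_iff : TailsVanish ⊤ a ↔ Tendsto a atTop (𝓝 0) := by
  simp only [TailsVanish, lqNorm_top]
  constructor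
  · intro h
    refine (tendsto_add_atTop_iff_nat 1).1 <| tendsto_of_tendsto_of_tendsto_of_le_of_le
      tendsto_const_nhds h (fun _ => zero_le) fun m => ?_
    exact le_iSup_of_le (m + 1) (by simp)
  · intro h
    rw [ENNReal.tendsto_nhds_zero] at h ⊢
    intro ε hε
    obtain ⟨N, hN⟩ := eventually_atTop.1 (h ε hε)
    filter_upwards [eventually_ge_atTop N] with m hm
    refine iSup_le fun k => ?_
    by_cases hk : k ∈ Set.Ioi m
    · simpa [hk] using hN k (hm.trans (Set.mem_Ioi.1 hk).le)
    · simp [hk]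

theorem tailsVanish_kernelConv (hq : 1 ≤ q) (ht : t < 1) (ha : ∀ k, a k ≠ ⊤)
    (h : TailsVanish q a) : TailsVanish q (kernelConv t a) := by
  set R : ℝ≥0∞ := 2 * (1 - t)⁻¹
  have hsplit : ∀ m K, lqNorm q ((Set.Ioi K).indicator (kernelConv t a))
      ≤ lqNorm q ((Set.Ioi K).indicator (kernelConv t ((Set.Iic m).indicator a)))
        + R * lqNorm q ((Set.Ioi m).indicator a) := by
    intro m K
    conv_lhs => rw [← indicator_Iic_add_indicator_Ioi a m, kernelConv_add, Set.indicator_add']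
    refine (lqNorm_add_le hq _ _).trans (add_le_add_right ?_ _)
    exact (lqNorm_indicator_le _ _).trans (lqNorm_kernelConv_le hq ht _)
  have hhead : ∀ m, TailsVanish q (kernelConv t ((Set.Iic m).indicator a)) := by
    intro m
    have hfin : ∑' k, (Set.Iic m).indicator a k ≠ ⊤ := by
      rw [tsum_indicator_Iic]
      exact (ENNReal.sum_lt_top.2 fun k _ => (ha k).lt_top).ne
    have hschur := lqNorm_kernelConv_le le_rfl ht ((Set.Iic m).indicator a)
    rw [lqNorm_one, lqNorm_one] at hschur
    exact tailsVanish_of_tsum_ne_top hq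
      (ne_top_of_le_ne_top (ENNReal.mul_ne_top (two_mul_inv_one_sub_ne_top ht) hfin) hschur)
  have htail : Tendsto (fun m => R * lqNorm q ((Set.Ioi m).indicator a)) atTop (𝓝 0) := by
    simpa using ENNReal.Tendsto.const_mul h (Or.inr (two_mul_inv_one_sub_ne_top ht))
  rw [TailsVanish, ENNReal.tendsto_nhds_zero]
  intro ε hε
  have hε₂ : 0 < ε / 2 := ENNReal.half_pos hε.ne'
  obtain ⟨m, hm⟩ := (htail.eventually (gt_mem_nhds hε₂)).exists
  filter_upwards [Tendsto.eventually (hhead m) (gt_mem_nhds hε₂)] with K hK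
  calc _ ≤ _ := hsplit m K
    _ ≤ ε / 2 + ε / 2 := add_le_add hK.le hm.le
    _ = ε := ENNReal.add_halves ε

/-! ### Weighted sequences and the spaces `Σ^s_q` -/

section Sequences

variable {E : Type*} {N : E → ℝ} {s : ℝ} {q : ℝ≥0∞}

noncomputable def weightedSeq (N : E → ℝ) (s : ℝ) (f : ℕ → E) (k : ℕ) : ℝ≥0∞ :=
  ENNReal.ofReal (2 ^ ((k : ℝ) * s) * N (f k))

theorem sigmaNorm_eq_lqNorm (N : E → ℝ) (s : ℝ) (q : ℝ≥0∞) (f : ℕ → E) :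
    sigmaNorm N s q f = lqNorm q (weightedSeq N s f) := rfl

theorem memSigma_iff_tailsVanish (hN : ∀ x, 0 ≤ N x) (hq : 1 ≤ q) (f : ℕ → E) :
    memSigma N s q f ↔ TailsVanish q (weightedSeq N s f) := by
  rcases eq_or_ne q ⊤ with rfl | hq'
  · rw [tailsVanish_top_iff]
    simp only [memSigma]
    refine ⟨fun h => ENNReal.ofReal_zero ▸ ENNReal.tendsto_ofReal h, fun h => ?_⟩
    have h' := (ENNReal.tendsto_toReal ENNReal.zero_ne_top).comp h
    simpa [Function.comp_def, weightedSeq,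
      ENNReal.toReal_ofReal (mul_nonneg (Real.rpow_nonneg zero_le_two _) (hN _))] using h'
  · rw [tailsVanish_iff_lqNorm_lt_top (a := weightedSeq N s f) hq hq'
      fun _ => ENNReal.ofReal_ne_top]
    simp only [memSigma, if_neg hq', sigmaNorm_eq_lqNorm]

theorem weightedSeq_eq_mul (N : E → ℝ) (s σ : ℝ) (f : ℕ → E) (k : ℕ) :
    weightedSeq N s f k = ENNReal.ofReal (2 ^ ((k : ℝ) * (s - σ))) * weightedSeq N σ f k := by
  rw [weightedSeq, weightedSeq, ← ENNReal.ofReal_mul (by positivity), ← mul_assoc,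
    ← Real.rpow_add two_pos, mul_sub, sub_add_cancel]

theorem weightedSeq_le_sigmaNorm_top (N : E → ℝ) (s σ : ℝ) (f : ℕ → E) (k : ℕ) :
    weightedSeq N s f k ≤ ENNReal.ofReal (2 ^ ((k : ℝ) * (s - σ))) * sigmaNorm N σ ⊤ f := by
  rw [weightedSeq_eq_mul N s σ]
  gcongr
  exact le_lqNorm ENNReal.top_ne_zero _ k

theorem ofReal_mul_weightedSeq_le {θ σ : ℝ} {k j : ℕ}
    (h : θ * Nat.dist k j ≤ ((k : ℝ) - j) * (σ - s)) (f : ℕ → E) :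
    ENNReal.ofReal (2 ^ ((k : ℝ) * (s - σ))) * weightedSeq N σ f j
      ≤ ENNReal.ofReal (2 ^ (-θ)) ^ Nat.dist k j * weightedSeq N s f j := by
  rw [weightedSeq_eq_mul N σ s f j, ← mul_assoc, ← ENNReal.ofReal_mul (by positivity),
    ← Real.rpow_add two_pos, ← ENNReal.ofReal_pow (by positivity), ← Real.rpow_natCast,
    ← Real.rpow_mul zero_le_two]
  gcongr
  · exact one_le_two
  · linarith

theorem weightedSeq_add_le [Add E] (hN : ∀ x y, N (x + y) ≤ N x + N y) (f g : ℕ → E) (k : ℕ) :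
    weightedSeq N s (f + g) k ≤ weightedSeq N s f k + weightedSeq N s g k := by
  refine (ENNReal.ofReal_le_ofReal ?_).trans ENNReal.ofReal_add_le
  rw [← mul_add]
  gcongr
  exact hN _ _

theorem weightedSeq_neg [Neg E] (hN : ∀ x, N (-x) = N x) (f : ℕ → E) :
    weightedSeq N s (-f) = weightedSeq N s f := by
  ext k
  simp [weightedSeq, hN]

theorem weightedSeq_indicator [Zero E] (hN0 : N 0 = 0) (S : Set ℕ) (f : ℕ → E) :
    weightedSeq N s (S.indicator f) = S.indicator (weightedSeq N s f) := by
  ext k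
  by_cases hk : k ∈ S <;> simp [weightedSeq, hk, hN0]

theorem smoothS_eq_indicator [Zero E] (n : ℕ) (f : ℕ → E) :
    smoothS n f = (Set.Iic n).indicator f := by
  ext k
  simp [smoothS, Set.indicator]

theorem sigmaNorm_smoothS_le [Zero E] (hN0 : N 0 = 0) (n : ℕ) (f : ℕ → E) :
    sigmaNorm N s q (smoothS n f) ≤ sigmaNorm N s q f := by
  rw [sigmaNorm_eq_lqNorm, smoothS_eq_indicator, weightedSeq_indicator hN0]
  exact lqNorm_indicator_le _ _

theorem memSigma_smoothS [Zero E] (hN : ∀ x, 0 ≤ N x) (hN0 : N 0 = 0) (hq : 1 ≤ q) (n : ℕ)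
    {f : ℕ → E} (hf : memSigma N s q f) : memSigma N s q (smoothS n f) := by
  rw [memSigma_iff_tailsVanish hN hq] at hf ⊢
  rw [smoothS_eq_indicator, weightedSeq_indicator hN0]
  exact hf.of_le_mul (zero_lt_one.trans_le hq).ne' ENNReal.one_ne_top fun k => by
    rw [one_mul]
    exact Set.indicator_le_self _ _ k

theorem sigmaNorm_one_smoothS [Zero E] (hN0 : N 0 = 0) (n : ℕ) (f : ℕ → E) :
    sigmaNorm N s 1 (smoothS n f) = ∑ j ∈ Finset.range (n + 1), weightedSeq N s f j := by
  rw [sigmaNorm_eq_lqNorm, lqNorm_one, smoothS_eq_indicator, weightedSeq_indicator hN0,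
    tsum_indicator_Iic]

theorem memSigma_one_smoothS [Zero E] (hN0 : N 0 = 0) (n : ℕ) (f : ℕ → E) :
    memSigma N s 1 (smoothS n f) := by
  simp only [memSigma, if_neg ENNReal.one_ne_top]
  rw [sigmaNorm_one_smoothS hN0]
  exact ENNReal.sum_lt_top.2 fun _ _ => ENNReal.ofReal_lt_top

theorem sigmaNorm_one_smoothS_succ_sub [AddGroup E] (hN0 : N 0 = 0) (n : ℕ) (f : ℕ → E) :
    sigmaNorm N s 1 (smoothS (n + 1) f - smoothS n f) = weightedSeq N s f (n + 1) := by
  rw [sigmaNorm_eq_lqNorm, lqNorm_one, tsum_eq_single (n + 1) fun k hk => ?_]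
  · simp [weightedSeq, smoothS]
  · by_cases hkn : k ≤ n
    · simp [weightedSeq, smoothS, hkn, Nat.le_succ_of_le hkn, hN0]
    · simp [weightedSeq, smoothS, hkn, show ¬k ≤ n + 1 by omega, hN0]

theorem tendsto_sigmaNorm_smoothS_sub [AddGroup E] (hN : ∀ x, 0 ≤ N x) (hN0 : N 0 = 0)
    (hneg : ∀ x, N (-x) = N x) (hq : 1 ≤ q) {f : ℕ → E} (hf : memSigma N s q f) :
    Tendsto (fun n => sigmaNorm N s q (smoothS n f - f)) atTop (𝓝 0) := by
  have hsub : ∀ n, smoothS n f - f = -(Set.Ioi n).indicator f := fun n => by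
    rw [smoothS_eq_indicator, ← Set.compl_Iic, Set.indicator_compl, neg_sub]
  rw [memSigma_iff_tailsVanish hN hq] at hf
  simpa only [TailsVanish, hsub, sigmaNorm_eq_lqNorm, weightedSeq_neg hneg,
    weightedSeq_indicator hN0] using hf

theorem memSigma_of_le_kernelConv {E' : Type*} {M : E' → ℝ} (hN : ∀ x, 0 ≤ N x)
    (hM : ∀ y, 0 ≤ M y) (hq : 1 ≤ q) {t C : ℝ≥0∞} (ht : t < 1) (hC : C ≠ ⊤) {f : ℕ → E}
    {g : ℕ → E'} (hf : memSigma N s q f)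
    (hg : ∀ k, weightedSeq M s g k ≤ C * kernelConv t (weightedSeq N s f) k) :
    memSigma M s q g := by
  rw [memSigma_iff_tailsVanish hN hq] at hf
  rw [memSigma_iff_tailsVanish hM hq]
  exact (tailsVanish_kernelConv hq ht (fun _ => ENNReal.ofReal_ne_top) hf).of_le_mul
    (zero_lt_one.trans_le hq).ne' hC hg

theorem sigmaNorm_le_head_add_tail (hq : 1 ≤ q) (σ : ℝ) (K : ℕ) (f : ℕ → E) :
    sigmaNorm N s q f
      ≤ (∑ k ∈ Finset.range (K + 1), ENNReal.ofReal (2 ^ ((k : ℝ) * (s - σ)))) * sigmaNorm N σ ⊤ f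
        + lqNorm q ((Set.Ioi K).indicator (weightedSeq N s f)) := by
  calc sigmaNorm N s q f
      ≤ lqNorm q ((Set.Iic K).indicator (weightedSeq N s f))
        + lqNorm q ((Set.Ioi K).indicator (weightedSeq N s f)) := lqNorm_le_head_add_tail hq K _
    _ ≤ _ := by
        gcongr
        calc lqNorm q ((Set.Iic K).indicator (weightedSeq N s f))
            ≤ ∑ k ∈ Finset.range (K + 1), weightedSeq N s f k := lqNorm_indicator_Iic_le hq K _
          _ ≤ ∑ k ∈ Finset.range (K + 1),
                ENNReal.ofReal (2 ^ ((k : ℝ) * (s - σ))) * sigmaNorm N σ ⊤ f :=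
              Finset.sum_le_sum fun k _ => weightedSeq_le_sigmaNorm_top N s σ f k
          _ = _ := (Finset.sum_mul ..).symm

end Sequences

/-- `Φ`, restricted to the ball `B_{s,q}(0,r)`, is continuous at `f` as a map into `Σ^{s'}_{q'}`. -/
def SigmaContinuousAt {E F : Type*} [Sub E] [Sub F] (N : E → ℝ) (M : F → ℝ) (s : ℝ)
    (q : ℝ≥0∞) (r s' : ℝ) (q' : ℝ≥0∞) (Φ : (ℕ → E) → ℕ → F) (f : ℕ → E) : Prop :=
  ∀ ε : ℝ, 0 < ε → ∃ δ : ℝ, 0 < δ ∧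
    ∀ g, memSigma N s q g → sigmaNorm N s q g < ENNReal.ofReal r →
      sigmaNorm N s q (g - f) < ENNReal.ofReal δ → sigmaNorm M s' q' (Φ g - Φ f) < ENNReal.ofReal ε

theorem SigmaContinuousAt.tendsto {E F : Type*} [Sub E] [Sub F] {N : E → ℝ} {M : F → ℝ}
    {s r s' : ℝ} {q q' : ℝ≥0∞} {Φ : (ℕ → E) → ℕ → F} {f : ℕ → E}
    (h : SigmaContinuousAt N M s q r s' q' Φ f) {ι : Type*} {l : Filter ι} {u : ι → ℕ → E}
    (hu : ∀ i, memSigma N s q (u i) ∧ sigmaNorm N s q (u i) < ENNReal.ofReal r)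
    (hlim : Tendsto (fun i => sigmaNorm N s q (u i - f)) l (𝓝 0)) :
    Tendsto (fun i => sigmaNorm M s' q' (Φ (u i) - Φ f)) l (𝓝 0) := by
  rw [ENNReal.tendsto_nhds_zero]
  intro ε hε
  obtain ⟨ε', -, hε'₀, hε'⟩ := ENNReal.lt_iff_exists_real_btwn.1 hε
  obtain ⟨δ, hδ, hΦ⟩ := h ε' (ENNReal.ofReal_pos.1 hε'₀)
  filter_upwards [hlim.eventually (gt_mem_nhds (ENNReal.ofReal_pos.2 hδ))] with i hi
  exact (hΦ (u i) (hu i).1 (hu i).2 hi).le.trans hε'.le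

/-! ### The pointwise kernel bound and its consequences -/

section Normed

variable {F : Type*} [NormedAddCommGroup F] {s : ℝ}

theorem weightedSeq_norm (s : ℝ) (x : ℕ → F) (k : ℕ) :
    weightedSeq (‖·‖) s x k = ENNReal.ofReal (2 ^ ((k : ℝ) * s)) * ‖x k‖ₑ := by
  rw [weightedSeq, ENNReal.ofReal_mul (by positivity), ofReal_norm]

theorem weightedSeq_norm_sub_le (x y : ℕ → F) (k : ℕ) :
    weightedSeq (‖·‖) s (x - y) k ≤ weightedSeq (‖·‖) s x k + weightedSeq (‖·‖) s y k := by
  simp only [weightedSeq_norm, ← mul_add, Pi.sub_apply]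
  gcongr
  exact enorm_sub_le

theorem tendsto_apply_of_tendsto_sigmaNorm_top {ι : Type*} {l : Filter ι} {σ : ℝ}
    {u : ι → ℕ → F} {y : ℕ → F} (h : Tendsto (fun i => sigmaNorm (‖·‖) σ ⊤ (u i - y)) l (𝓝 0))
    (k : ℕ) : Tendsto (fun i => u i k) l (𝓝 (y k)) := by
  set c := ENNReal.ofReal (2 ^ ((k : ℝ) * (0 - σ)))
  have hlim : Tendsto (fun i => c * sigmaNorm (‖·‖) σ ⊤ (u i - y)) l (𝓝 0) := by
    simpa using ENNReal.Tendsto.const_mul h (Or.inr ENNReal.ofReal_ne_top)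
  rw [tendsto_iff_enorm_sub_tendsto_zero]
  refine tendsto_of_tendsto_of_tendsto_of_le_of_le tendsto_const_nhds hlim (fun _ => zero_le)
    fun i => ?_
  calc ‖u i k - y k‖ₑ = weightedSeq (‖·‖) 0 (u i - y) k := by simp [weightedSeq_norm]
    _ ≤ _ := weightedSeq_le_sigmaNorm_top _ 0 σ _ k

theorem weightedSeq_le_mul_sum_pow_dist {E : Type*} [Zero E] {N : E → ℝ} (hN0 : N 0 = 0)
    {s₁ θ : ℝ} (hθ₁ : θ ≤ s₁ - s) {C₁ : ℝ≥0∞} {v : ℕ → E} {x : ℕ → F} {k : ℕ}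
    (hx : sigmaNorm (‖·‖) s₁ ⊤ x ≤ C₁ * sigmaNorm N s₁ 1 (smoothS k v)) :
    weightedSeq (‖·‖) s x k
      ≤ C₁ * ∑ j ∈ Finset.range (k + 1), ENNReal.ofReal (2 ^ (-θ)) ^ Nat.dist k j
        * weightedSeq N s v j :=
  calc weightedSeq (‖·‖) s x k
      ≤ ENNReal.ofReal (2 ^ ((k : ℝ) * (s - s₁))) * (C₁ * sigmaNorm N s₁ 1 (smoothS k v)) :=
        (weightedSeq_le_sigmaNorm_top _ s s₁ x k).trans (by gcongr)
    _ = C₁ * ∑ j ∈ Finset.range (k + 1),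
          ENNReal.ofReal (2 ^ ((k : ℝ) * (s - s₁))) * weightedSeq N s₁ v j := by
        rw [sigmaNorm_one_smoothS hN0, mul_left_comm, Finset.mul_sum]
    _ ≤ _ := by
        refine mul_le_mul_right (Finset.sum_le_sum fun j hj => ?_) _
        have hjk : j ≤ k := Finset.mem_range_succ_iff.1 hj
        refine ofReal_mul_weightedSeq_le ?_ v
        rw [Nat.dist_eq_sub_of_le_right hjk, Nat.cast_sub hjk, mul_comm]
        exact mul_le_mul_of_nonneg_left hθ₁ (sub_nonneg.2 (Nat.cast_le.2 hjk))

theorem weightedSeq_le_mul_pow_dist {E : Type*} {N : E → ℝ} {s₀ θ : ℝ} (hθ₀ : θ ≤ s - s₀)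
    {C₀ : ℝ≥0∞} {v : ℕ → E} {x : ℕ → F} {k j : ℕ} (hkj : k ≤ j)
    (hx : sigmaNorm (‖·‖) s₀ ⊤ x ≤ C₀ * weightedSeq N s₀ v j) :
    weightedSeq (‖·‖) s x k
      ≤ C₀ * (ENNReal.ofReal (2 ^ (-θ)) ^ Nat.dist k j * weightedSeq N s v j) :=
  calc weightedSeq (‖·‖) s x k
      ≤ ENNReal.ofReal (2 ^ ((k : ℝ) * (s - s₀))) * (C₀ * weightedSeq N s₀ v j) :=
        (weightedSeq_le_sigmaNorm_top _ s s₀ x k).trans (by gcongr)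
    _ = C₀ * (ENNReal.ofReal (2 ^ ((k : ℝ) * (s - s₀))) * weightedSeq N s₀ v j) := mul_left_comm ..
    _ ≤ _ := by
        refine mul_le_mul_right (ofReal_mul_weightedSeq_le ?_ v) _
        rw [Nat.dist_eq_sub_of_le hkj, Nat.cast_sub hkj]
        nlinarith [mul_le_mul_of_nonneg_left hθ₀ (sub_nonneg.2 (Nat.cast_le.2 hkj))]

theorem weightedSeq_le_kernelConv {E : Type*} [AddGroup E] {N : E → ℝ} (hN0 : N 0 = 0)
    {Φ : (ℕ → E) → ℕ → F} {v : ℕ → E} {s₀ s₁ θ : ℝ} (hθ₀ : θ ≤ s - s₀) (hθ₁ : θ ≤ s₁ - s)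
    {C₀ C₁ : ℝ≥0∞}
    (hlim : Tendsto (fun n => sigmaNorm (‖·‖) s₀ ⊤ (Φ (smoothS n v) - Φ v)) atTop (𝓝 0))
    (htame : ∀ n, sigmaNorm (‖·‖) s₁ ⊤ (Φ (smoothS n v)) ≤ C₁ * sigmaNorm N s₁ 1 (smoothS n v))
    (hlip : ∀ n, sigmaNorm (‖·‖) s₀ ⊤ (Φ (smoothS (n + 1) v) - Φ (smoothS n v))
      ≤ C₀ * sigmaNorm N s₀ 1 (smoothS (n + 1) v - smoothS n v)) (k : ℕ) :
    weightedSeq (‖·‖) s (Φ v) k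
      ≤ (C₀ + C₁) * kernelConv (ENNReal.ofReal (2 ^ (-θ))) (weightedSeq N s v) k := by
  set t := ENNReal.ofReal (2 ^ (-θ))
  set a := weightedSeq N s v
  set c := ENNReal.ofReal (2 ^ ((k : ℝ) * s))
  set u : ℕ → F := fun i => Φ (smoothS (i + k) v) k
  have hu : Tendsto u atTop (𝓝 (Φ v k)) :=
    (tendsto_apply_of_tendsto_sigmaNorm_top hlim k).comp (tendsto_add_atTop_nat k)
  have hlow : c * ‖u 0‖ₑ ≤ C₁ * ∑ j ∈ Finset.range (k + 1), t ^ Nat.dist k j * a j := by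
    rw [show u 0 = Φ (smoothS k v) k by simp only [u, zero_add], ← weightedSeq_norm]
    exact weightedSeq_le_mul_sum_pow_dist hN0 hθ₁ (htame k)
  have hhigh : ∀ i, c * ‖u (i + 1) - u i‖ₑ
      ≤ C₀ * (t ^ Nat.dist k (i + (k + 1)) * a (i + (k + 1))) := fun i =>
    calc c * ‖u (i + 1) - u i‖ₑ
        = weightedSeq (‖·‖) s (Φ (smoothS (i + k + 1) v) - Φ (smoothS (i + k) v)) k := by
          rw [weightedSeq_norm, Pi.sub_apply, add_right_comm]
      _ ≤ C₀ * (t ^ Nat.dist k (i + k + 1) * a (i + k + 1)) :=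
          weightedSeq_le_mul_pow_dist hθ₀ (by omega)
            ((hlip (i + k)).trans_eq (by rw [sigmaNorm_one_smoothS_succ_sub hN0]))
      _ = _ := by rw [add_assoc]
  calc weightedSeq (‖·‖) s (Φ v) k = c * ‖Φ v k‖ₑ := weightedSeq_norm s _ k
    _ ≤ c * (‖u 0‖ₑ + ∑' i, ‖u (i + 1) - u i‖ₑ) := by
        gcongr
        exact enorm_le_add_tsum_of_tendsto hu
    _ = c * ‖u 0‖ₑ + ∑' i, c * ‖u (i + 1) - u i‖ₑ := by rw [mul_add, ENNReal.tsum_mul_left]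
    _ ≤ C₁ * ∑ j ∈ Finset.range (k + 1), t ^ Nat.dist k j * a j
          + C₀ * ∑' i, t ^ Nat.dist k (i + (k + 1)) * a (i + (k + 1)) := by
        rw [← ENNReal.tsum_mul_left]
        exact add_le_add hlow (ENNReal.tsum_le_tsum hhigh)
    _ ≤ (C₀ + C₁) * ∑ j ∈ Finset.range (k + 1), t ^ Nat.dist k j * a j
          + (C₀ + C₁) * ∑' i, t ^ Nat.dist k (i + (k + 1)) * a (i + (k + 1)) := by
        gcongr
        · exact le_add_self
        · exact le_self_add
    _ = (C₀ + C₁) * kernelConv t a k := by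
        rw [← mul_add, kernelConv, ENNReal.sum_range_add_tsum_nat_add]

theorem lqNorm_tail_sub_le {E : Type*} [AddCommGroup E] {N : E → ℝ}
    (hN : ∀ x y, N (x + y) ≤ N x + N y) {q : ℝ≥0∞} (hq : 1 ≤ q) {t C : ℝ≥0∞} (ht : t < 1)
    {f g : ℕ → E} {x y : ℕ → F}
    (hx : ∀ k, weightedSeq (‖·‖) s x k ≤ C * kernelConv t (weightedSeq N s g) k)
    (hy : ∀ k, weightedSeq (‖·‖) s y k ≤ C * kernelConv t (weightedSeq N s f) k) (K : ℕ) :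
    lqNorm q ((Set.Ioi K).indicator (weightedSeq (‖·‖) s (x - y)))
      ≤ 2 * C * lqNorm q ((Set.Ioi K).indicator (kernelConv t (weightedSeq N s f)))
        + C * (2 * (1 - t)⁻¹) * sigmaNorm N s q (g - f) := by
  have hq₀ : q ≠ 0 := (zero_lt_one.trans_le hq).ne'
  set b := kernelConv t (weightedSeq N s f)
  set d := kernelConv t (weightedSeq N s (g - f))
  have hg : kernelConv t (weightedSeq N s g) ≤ b + d := by
    rw [← kernelConv_add]
    refine kernelConv_mono fun k => ?_
    simpa only [Pi.add_apply, add_sub_cancel] using weightedSeq_add_le hN f (g - f) k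
  have hpoint : (Set.Ioi K).indicator (weightedSeq (‖·‖) s (x - y))
      ≤ (fun k => 2 * C * (Set.Ioi K).indicator b k) + fun k => C * d k := by
    intro k
    by_cases hk : k ∈ Set.Ioi K
    · simp only [Set.indicator_of_mem hk, Pi.add_apply]
      calc weightedSeq (‖·‖) s (x - y) k
          ≤ weightedSeq (‖·‖) s x k + weightedSeq (‖·‖) s y k := weightedSeq_norm_sub_le x y k
        _ ≤ C * (b k + d k) + C * b k := add_le_add ((hx k).trans (by gcongr; exact hg k)) (hy k)
        _ = 2 * C * b k + C * d k := by ring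
    · simp [Set.indicator_of_notMem hk]
  calc _ ≤ lqNorm q (fun k => 2 * C * (Set.Ioi K).indicator b k) + lqNorm q fun k => C * d k :=
        (lqNorm_mono hpoint).trans (lqNorm_add_le hq _ _)
    _ = 2 * C * lqNorm q ((Set.Ioi K).indicator b) + C * lqNorm q d := by
        rw [lqNorm_const_mul hq₀, lqNorm_const_mul hq₀]
    _ ≤ _ := by
        rw [mul_assoc C]
        gcongr
        exact lqNorm_kernelConv_le hq ht _

theorem sigmaContinuousAt_of_le_kernelConv {E : Type*} [AddCommGroup E] {N : E → ℝ}
    (hN : ∀ x, 0 ≤ N x) (hadd : ∀ x y, N (x + y) ≤ N x + N y) {s₀ r : ℝ} {q : ℝ≥0∞}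
    (hq : 1 ≤ q) {Φ : (ℕ → E) → ℕ → F} {t C : ℝ≥0∞} (ht : t < 1) (hC : C ≠ ⊤)
    (hbound : ∀ v, memSigma N s q v → sigmaNorm N s q v < ENNReal.ofReal r →
      ∀ k, weightedSeq (‖·‖) s (Φ v) k ≤ C * kernelConv t (weightedSeq N s v) k)
    {f : ℕ → E} (hf : memSigma N s q f) (hfr : sigmaNorm N s q f < ENNReal.ofReal r)
    (hcont : SigmaContinuousAt N (‖·‖) s q r s₀ ⊤ Φ f) :
    SigmaContinuousAt N (‖·‖) s q r s q Φ f := by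
  intro ε hε
  set b := kernelConv t (weightedSeq N s f)
  have hε₃ : 0 < ENNReal.ofReal ε / 3 :=
    ENNReal.div_pos (ENNReal.ofReal_pos.2 hε).ne' ENNReal.ofNat_ne_top
  have htail : Tendsto (fun K => 2 * C * lqNorm q ((Set.Ioi K).indicator b)) atTop (𝓝 0) := by
    simpa only [mul_zero] using ENNReal.Tendsto.const_mul
      (tailsVanish_kernelConv (a := weightedSeq N s f) hq ht (fun _ => ENNReal.ofReal_ne_top)
        ((memSigma_iff_tailsVanish hN hq f).1 hf))
      (Or.inr (ENNReal.mul_ne_top ENNReal.ofNat_ne_top hC))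
  obtain ⟨K, hK⟩ := (htail.eventually (gt_mem_nhds hε₃)).exists
  set A := ∑ k ∈ Finset.range (K + 1), ENNReal.ofReal (2 ^ ((k : ℝ) * (s - s₀)))
  obtain ⟨ε₂, hε₂, hA⟩ :=
    ENNReal.exists_pos_mul_ofReal_lt (ENNReal.sum_ne_top.2 fun _ _ => ENNReal.ofReal_ne_top) hε₃
  obtain ⟨δ₁, hδ₁, hB⟩ :=
    ENNReal.exists_pos_mul_ofReal_lt (ENNReal.mul_ne_top hC (two_mul_inv_one_sub_ne_top ht)) hε₃
  obtain ⟨δ₂, hδ₂, hΦ⟩ := hcont ε₂ hε₂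
  refine ⟨min δ₁ δ₂, lt_min hδ₁ hδ₂, fun g hg hgr hgf => ?_⟩
  have hgf₁ := hgf.trans_le (ENNReal.ofReal_le_ofReal (min_le_left δ₁ δ₂))
  have hgf₂ := hgf.trans_le (ENNReal.ofReal_le_ofReal (min_le_right δ₁ δ₂))
  calc sigmaNorm (‖·‖) s q (Φ g - Φ f)
      ≤ A * sigmaNorm (‖·‖) s₀ ⊤ (Φ g - Φ f) + (2 * C * lqNorm q ((Set.Ioi K).indicator b)
          + C * (2 * (1 - t)⁻¹) * sigmaNorm N s q (g - f)) :=
        (sigmaNorm_le_head_add_tail hq s₀ K _).trans <| add_le_add_right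
          (lqNorm_tail_sub_le hadd hq ht (hbound g hg hgr) (hbound f hf hfr) K) _
    _ < ENNReal.ofReal ε / 3 + (ENNReal.ofReal ε / 3 + ENNReal.ofReal ε / 3) :=
        ENNReal.add_lt_add ((mul_le_mul_right (hΦ g hg hgr hgf₂).le _).trans_lt hA)
          (ENNReal.add_lt_add hK ((mul_le_mul_right hgf₁.le _).trans_lt hB))
    _ = ENNReal.ofReal ε := by rw [← add_assoc, ENNReal.add_thirds]

end Normed

end SigmaSpace

open SigmaSpace in
theorem interpolation_continuity_banach_general
    {E F : Type*} [AddCommGroup E] [Module ℝ E]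
    [NormedAddCommGroup F]
    (NE : E → ℝ) (hNE : IsPseudoNorm NE)
    (s₀ s s₁ : ℝ) (hs₀ : s₀ < s) (hs₁ : s < s₁)
    (q : ℝ≥0∞) (hq : 1 ≤ q) (r : ℝ)
    (Φ : (ℕ → E) → (ℕ → F))
    -- Φ is continuous from (B_{s,q}(0,r), ‖·‖_{Σ^s_q(E)}) to (Σ^{s₀}_∞(F), ‖·‖_{Σ^{s₀}_∞(F)})
    (hΦcont : ∀ f, memSigma NE s q f → sigmaNorm NE s q f < ENNReal.ofReal r →
      ∀ ε : ℝ, 0 < ε → ∃ δ : ℝ, 0 < δ ∧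
        ∀ g, memSigma NE s q g → sigmaNorm NE s q g < ENNReal.ofReal r →
          sigmaNorm NE s q (g - f) < ENNReal.ofReal δ →
          sigmaNorm (fun x : F => ‖x‖) s₀ ⊤ (Φ g - Φ f) < ENNReal.ofReal ε)
    -- weak contraction estimate for smooth data
    (C₀ : ℝ)
    (hlip : ∀ v w, (∀ σ : ℝ, memSigma NE σ 1 v) → (∀ σ : ℝ, memSigma NE σ 1 w) →
      memSigma NE s q v → sigmaNorm NE s q v < ENNReal.ofReal r →
      memSigma NE s q w → sigmaNorm NE s q w < ENNReal.ofReal r →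
      sigmaNorm (fun x : F => ‖x‖) s₀ ⊤ (Φ v - Φ w)
        ≤ ENNReal.ofReal C₀ * sigmaNorm NE s₀ 1 (v - w))
    -- tame estimate
    (C₁ : ℝ)
    (htame : ∀ v, (∀ σ : ℝ, memSigma NE σ 1 v) →
      memSigma NE s q v → sigmaNorm NE s q v < ENNReal.ofReal r →
      sigmaNorm (fun x : F => ‖x‖) s₁ ⊤ (Φ v) ≤ ENNReal.ofReal C₁ * sigmaNorm NE s₁ 1 v) :
    (∀ v, memSigma NE s q v → sigmaNorm NE s q v < ENNReal.ofReal r →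
      memSigma (fun x : F => ‖x‖) s q (Φ v)) ∧
    (∀ f, memSigma NE s q f → sigmaNorm NE s q f < ENNReal.ofReal r →
      ∀ ε : ℝ, 0 < ε → ∃ δ : ℝ, 0 < δ ∧
        ∀ g, memSigma NE s q g → sigmaNorm NE s q g < ENNReal.ofReal r →
          sigmaNorm NE s q (g - f) < ENNReal.ofReal δ →
          sigmaNorm (fun x : F => ‖x‖) s q (Φ g - Φ f) < ENNReal.ofReal ε) := by
  have hN0 : NE 0 = 0 := (hNE.eq_zero_iff 0).2 rfl
  set θ := min (s₁ - s) (s - s₀)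
  have ht : ENNReal.ofReal (2 ^ (-θ)) < 1 := by
    rw [ENNReal.ofReal_lt_one]
    exact Real.rpow_lt_one_of_one_lt_of_neg one_lt_two
      (neg_neg_of_pos (lt_min (by linarith) (by linarith)))
  have hbound : ∀ v, memSigma NE s q v → sigmaNorm NE s q v < ENNReal.ofReal r → ∀ k,
      weightedSeq (‖·‖) s (Φ v) k ≤ (ENNReal.ofReal C₀ + ENNReal.ofReal C₁)
        * kernelConv (ENNReal.ofReal (2 ^ (-θ))) (weightedSeq NE s v) k := by
    intro v hv hvr
    have hball : ∀ n, memSigma NE s q (smoothS n v)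
        ∧ sigmaNorm NE s q (smoothS n v) < ENNReal.ofReal r := fun n =>
      ⟨memSigma_smoothS hNE.nonneg hN0 hq n hv, (sigmaNorm_smoothS_le hN0 n v).trans_lt hvr⟩
    have hsmooth : ∀ n σ, memSigma NE σ 1 (smoothS n v) := fun n _ => memSigma_one_smoothS hN0 n v
    refine weightedSeq_le_kernelConv hN0 (min_le_right _ _) (min_le_left _ _) ?_
      (fun n => htame _ (hsmooth n) (hball n).1 (hball n).2)
      (fun n => hlip _ _ (hsmooth _) (hsmooth n) (hball _).1 (hball _).2 (hball n).1 (hball n).2)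
    exact SigmaContinuousAt.tendsto (hΦcont v hv hvr) hball
      (tendsto_sigmaNorm_smoothS_sub hNE.nonneg hN0 hNE.neg hq hv)
  have hC : ENNReal.ofReal C₀ + ENNReal.ofReal C₁ ≠ ⊤ :=
    ENNReal.add_ne_top.2 ⟨ENNReal.ofReal_ne_top, ENNReal.ofReal_ne_top⟩
  exact ⟨fun v hv hvr => memSigma_of_le_kernelConv hNE.nonneg (fun _ => norm_nonneg _) hq ht hC hv
      (hbound v hv hvr),
    fun f hf hfr => sigmaContinuousAt_of_le_kernelConv hNE.nonneg hNE.add_le hq ht hC hbound hf hfr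
      (hΦcont f hf hfr)⟩

/-- Proposition 2.11: with `F` a Banach space, if `Φ : B_{s,q}(0,r) → Σ^{s₀}_∞(F)` is
continuous, satisfies the tame estimate, and satisfies the weak Lipschitz (contraction)
estimate only for smooth data `v, w ∈ Σ^∞_1(E) ∩ B_{s,q}(0,r)`, then `Φ(v) ∈ Σ^s_q(F)`
for all `v ∈ B_{s,q}(0,r)` and `Φ : B_{s,q}(0,r) → Σ^s_q(F)` is continuous. -/
theorem interpolation_continuity_banach
    {E F : Type*} [AddCommGroup E] [Module ℝ E]
    [NormedAddCommGroup F] [NormedSpace ℝ F] [CompleteSpace F]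
    (NE : E → ℝ) (hNE : IsPseudoNorm NE)
    (s₀ s s₁ : ℝ) (hs₀ : s₀ < s) (hs₁ : s < s₁)
    (q : ℝ≥0∞) (hq : 1 ≤ q) (r : ℝ) (hr : 0 < r)
    (Φ : (ℕ → E) → (ℕ → F))
    -- Φ maps the ball B_{s,q}(0,r) into Σ^{s₀}_∞(F)
    (hΦmem : ∀ v, memSigma NE s q v → sigmaNorm NE s q v < ENNReal.ofReal r →
      memSigma (fun x : F => ‖x‖) s₀ ⊤ (Φ v))
    -- Φ is continuous from (B_{s,q}(0,r), ‖·‖_{Σ^s_q(E)}) to (Σ^{s₀}_∞(F), ‖·‖_{Σ^{s₀}_∞(F)})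
    (hΦcont : ∀ f, memSigma NE s q f → sigmaNorm NE s q f < ENNReal.ofReal r →
      ∀ ε : ℝ, 0 < ε → ∃ δ : ℝ, 0 < δ ∧
        ∀ g, memSigma NE s q g → sigmaNorm NE s q g < ENNReal.ofReal r →
          sigmaNorm NE s q (g - f) < ENNReal.ofReal δ →
          sigmaNorm (fun x : F => ‖x‖) s₀ ⊤ (Φ g - Φ f) < ENNReal.ofReal ε)
    -- weak contraction estimate for smooth data
    (C₀ : ℝ) (hC₀ : 0 < C₀)
    (hlip : ∀ v w, (∀ σ : ℝ, memSigma NE σ 1 v) → (∀ σ : ℝ, memSigma NE σ 1 w) →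
      memSigma NE s q v → sigmaNorm NE s q v < ENNReal.ofReal r →
      memSigma NE s q w → sigmaNorm NE s q w < ENNReal.ofReal r →
      sigmaNorm (fun x : F => ‖x‖) s₀ ⊤ (Φ v - Φ w)
        ≤ ENNReal.ofReal C₀ * sigmaNorm NE s₀ 1 (v - w))
    -- tame estimate
    (C₁ : ℝ) (hC₁ : 0 < C₁)
    (htame : ∀ v, (∀ σ : ℝ, memSigma NE σ 1 v) →
      memSigma NE s q v → sigmaNorm NE s q v < ENNReal.ofReal r →
      sigmaNorm (fun x : F => ‖x‖) s₁ ⊤ (Φ v) ≤ ENNReal.ofReal C₁ * sigmaNorm NE s₁ 1 v) :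
    (∀ v, memSigma NE s q v → sigmaNorm NE s q v < ENNReal.ofReal r →
      memSigma (fun x : F => ‖x‖) s q (Φ v)) ∧
    (∀ f, memSigma NE s q f → sigmaNorm NE s q f < ENNReal.ofReal r →
      ∀ ε : ℝ, 0 < ε → ∃ δ : ℝ, 0 < δ ∧
        ∀ g, memSigma NE s q g → sigmaNorm NE s q g < ENNReal.ofReal r →
          sigmaNorm NE s q (g - f) < ENNReal.ofReal δ →
          sigmaNorm (fun x : F => ‖x‖) s q (Φ g - Φ f) < ENNReal.ofReal ε) :=
  interpolation_continuity_banach_general NE hNE s₀ s s₁ hs₀ hs₁ q hq r Φ hΦcont C₀ hlip C₁ htame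
end
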